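/- arXiv:1209.6448 — 10 statements merged into one kernel-verified Lean document; each statement's English description precedes it below -/
import Mathlib

section
/- In the setting with n agents, m divisible items, multi-dimensional additive valuations, and budgets b: if at least one agent i has strictly positive valuation v i j > 0 for an item j, then every outcome (x, p) that respects budgets, is individually rational, and is Pareto optimal assigns all of item j, i.e., ∑ i, x i j = 1. -/
open Finset

/-- A feasible (divisible) allocation: fractions in `[0,1]` and each item sold at most once.
Agents/items are indexed from `0` (paper's agent/item `k` is index `k-1`). -/
def Feasible (n m : ℕ) (x : Fin n → Fin m → ℝ) : Prop :=
  (∀ i j, 0 ≤ x i j ∧ x i j ≤ 1) ∧ ∀ j, ∑ i, x i j ≤ 1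

/-- Agent `i`'s (additive, multi-dimensional) value for allocation `x` under valuations `v`. -/
def agentValue {n m : ℕ} (v x : Fin n → Fin m → ℝ) (i : Fin n) : ℝ :=
  ∑ j, x i j * v i j

/-- Individual rationality of an outcome `(x, p)` under valuations `v`. -/
def IR {n m : ℕ} (v x : Fin n → Fin m → ℝ) (p : Fin n → ℝ) : Prop :=
  (∀ i, 0 ≤ agentValue v x i - p i) ∧ 0 ≤ ∑ i, p i

/-- Pareto optimality of an outcome `(x, p)` under valuations `v` and budgets `b`. -/
def PO {n m : ℕ} (b : Fin n → ℝ) (v x : Fin n → Fin m → ℝ) (p : Fin n → ℝ) : Prop :=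
  ¬ ∃ (x' : Fin n → Fin m → ℝ) (p' : Fin n → ℝ),
      Feasible n m x' ∧ (∀ i, p' i ≤ b i) ∧
      (∀ i, agentValue v x i - p i ≤ agentValue v x' i - p' i) ∧
      (∑ i, p i ≤ ∑ i, p' i) ∧
      ((∃ i, agentValue v x i - p i < agentValue v x' i - p' i) ∨ ∑ i, p i < ∑ i, p' i)

/-- The payment rule respects the public budgets `b` on every (nonnegative) profile. -/
def RespectsBudgets {n m : ℕ} (b : Fin n → ℝ)
    (P : (Fin n → Fin m → ℝ) → Fin n → ℝ) : Prop :=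
  ∀ v : Fin n → Fin m → ℝ, (∀ i j, 0 ≤ v i j) → ∀ i, P v i ≤ b i

/-- Incentive compatibility of a deterministic mechanism `(X, P)`. -/
def IC {n m : ℕ} (X : (Fin n → Fin m → ℝ) → Fin n → Fin m → ℝ)
    (P : (Fin n → Fin m → ℝ) → Fin n → ℝ) : Prop :=
  ∀ v : Fin n → Fin m → ℝ, (∀ i j, 0 ≤ v i j) →
    ∀ (i : Fin n) (v'i : Fin m → ℝ), (∀ j, 0 ≤ v'i j) →
      agentValue v (X (Function.update v i v'i)) i - P (Function.update v i v'i) i ≤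
        agentValue v (X v) i - P v i

/-- in every IR and PO outcome that respects budgets, any item for which
some agent has a strictly positive valuation is fully assigned. -/
theorem stmt1 (n m : ℕ) (v : Fin n → Fin m → ℝ) (b : Fin n → ℝ)
    (x : Fin n → Fin m → ℝ) (p : Fin n → ℝ)
    (hv : ∀ i j, 0 ≤ v i j) (hb : ∀ i, 0 ≤ b i)
    (hx : Feasible n m x) (hbud : ∀ i, p i ≤ b i)
    (hIR : IR v x p) (hPO : PO b v x p)
    (i : Fin n) (j : Fin m) (hpos : 0 < v i j) :
    ∑ i', x i' j = 1 := by
  by_contra hne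
  have hle : ∑ i', x i' j ≤ 1 := hx.2 j
  have hlt : ∑ i', x i' j < 1 := lt_of_le_of_ne hle hne
  set ε : ℝ := 1 - ∑ i', x i' j with hε
  have hεpos : 0 < ε := by simp [hε]; linarith
  set x' : Fin n → Fin m → ℝ :=
    Function.update x i (Function.update (x i) j (x i j + ε)) with hx'
  have hxij_le : x i j ≤ ∑ i', x i' j :=
    Finset.single_le_sum (f := fun i' => x i' j) (fun i' _ => (hx.1 i' j).1)
      (Finset.mem_univ i)
  have hx'eq : ∀ i' j', i' ≠ i ∨ j' ≠ j → x' i' j' = x i' j' := by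
    intro i' j' h
    rcases h with h | h
    · simp [hx', Function.update_of_ne h]
    · by_cases hi : i' = i
      · subst hi; simp [hx', Function.update_of_ne h]
      · simp [hx', Function.update_of_ne hi]
  have hx'ij : x' i j = x i j + ε := by simp [hx']
  have hfeas : Feasible n m x' := by
    constructor
    · intro i' j'
      by_cases h : i' = i ∧ j' = j
      · rw [h.1, h.2, hx'ij]
        constructor
        · have := (hx.1 i j).1; linarith
        · have : x i j + ε ≤ ∑ i', x i' j + ε := by linarith
          simp [hε] at this ⊢; linarith
      · rw [hx'eq i' j' (by tauto)]; exact hx.1 i' j'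
    · intro j'
      by_cases hj : j' = j
      · rw [hj]
        have : ∑ i', x' i' j = (∑ i', x i' j) + ε := by
          rw [Finset.sum_eq_sum_sdiff_singleton_add (Finset.mem_univ i) (fun i' => x' i' j),
              Finset.sum_eq_sum_sdiff_singleton_add (Finset.mem_univ i) (fun i' => x i' j),
              hx'ij]
          have : ∑ i' ∈ Finset.univ \ {i}, x' i' j = ∑ i' ∈ Finset.univ \ {i}, x i' j := by
            apply Finset.sum_congr rfl
            intro i' hi'
            simp only [Finset.mem_sdiff, Finset.mem_singleton] at hi'
            exact hx'eq i' j (Or.inl hi'.2)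
          rw [this]; ring
        rw [this, hε]; linarith
      · have : ∑ i', x' i' j' = ∑ i', x i' j' := by
          apply Finset.sum_congr rfl
          intro i' _
          exact hx'eq i' j' (Or.inr hj)
        rw [this]; exact hx.2 j'
  apply hPO
  refine ⟨x', p, hfeas, hbud, ?_, le_refl _, Or.inl ⟨i, ?_⟩⟩
  · intro i'
    by_cases hi : i' = i
    · rw [hi]
      have : agentValue v x' i = agentValue v x i + ε * v i j := by
        unfold agentValue
        rw [Finset.sum_eq_sum_sdiff_singleton_add (Finset.mem_univ j)
              (fun j' => x' i j' * v i j'),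
            Finset.sum_eq_sum_sdiff_singleton_add (Finset.mem_univ j)
              (fun j' => x i j' * v i j'), hx'ij]
        have : ∑ j' ∈ Finset.univ \ {j}, x' i j' * v i j'
            = ∑ j' ∈ Finset.univ \ {j}, x i j' * v i j' := by
          apply Finset.sum_congr rfl
          intro j' hj'
          simp only [Finset.mem_sdiff, Finset.mem_singleton] at hj'
          rw [hx'eq i j' (Or.inr hj'.2)]
        rw [this]; ring
      rw [this]
      nlinarith
    · have : agentValue v x' i' = agentValue v x i' := by
        unfold agentValue
        apply Finset.sum_congr rfl
        intro j' _
        rw [hx'eq i' j' (Or.inl hi)]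
      rw [this]
  · have : agentValue v x' i = agentValue v x i + ε * v i j := by
      unfold agentValue
      rw [Finset.sum_eq_sum_sdiff_singleton_add (Finset.mem_univ j)
            (fun j' => x' i j' * v i j'),
          Finset.sum_eq_sum_sdiff_singleton_add (Finset.mem_univ j)
            (fun j' => x i j' * v i j'), hx'ij]
      have : ∑ j' ∈ Finset.univ \ {j}, x' i j' * v i j'
          = ∑ j' ∈ Finset.univ \ {j}, x i j' * v i j' := by
        apply Finset.sum_congr rfl
        intro j' hj'
        simp only [Finset.mem_sdiff, Finset.mem_singleton] at hj'
        rw [hx'eq i j' (Or.inr hj'.2)]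
      rw [this]; ring
    rw [this]
    nlinarith
end

section
/- Let M = (x, p) be a deterministic mechanism for 2 agents, 2 divisible items, multi-dimensional additive valuations, and public budgets b, that respects budgets, is incentive compatible, and whose outcome on every valuation profile is individually rational and Pareto optimal. Then for every valuation profile v satisfying b 2 > v 2 1 + v 2 2, v 2 1 > v 1 1, and v 2 2 > v 1 2, the outcome satisfies x 1 1 = 0, x 1 2 = 0, x 2 1 = 1, x 2 2 = 1, and agent 1's utility is 0 (equivalently p 1 = 0). -/
open Finset

/-!
Pareto optimality forces a welfare-maximising allocation whenever the transfers that compensate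
every agent for her change in value fit in the budgets. Hence an agent who values every item
more than the other agent and can afford all of them wins everything.

When agent 0 reports zero values, agent 1 wins everything yet pays nothing, since otherwise he
would gain by reporting tiny values. Individual rationality of the revenue then makes agent 0
pay at least `0` there, and by incentive compatibility she pays no less at her true values.
-/

section Outcome

variable {n m : ℕ} {b : Fin n → ℝ} {v x : Fin n → Fin m → ℝ} {p : Fin n → ℝ}

lemma agentValue_nonneg (hx : Feasible n m x) {i : Fin n} (hv : ∀ j, 0 ≤ v i j) :
    0 ≤ agentValue v x i :=
  sum_nonneg fun j _ => mul_nonneg (hx.1 i j).1 (hv j)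

lemma agentValue_eq_zero_of_alloc_eq_zero {i : Fin n} (hx : ∀ j, x i j = 0) :
    agentValue v x i = 0 := by
  simp [agentValue, hx]

lemma agentValue_eq_sum_of_alloc_eq_one {i : Fin n} (hx : ∀ j, x i j = 1) :
    agentValue v x i = ∑ j, v i j := by
  simp [agentValue, hx]

/-- Charging every agent the change in her value keeps all utilities and changes the revenue by
the change in welfare. -/
lemma PO.sum_agentValue_le (hPO : PO b v x p) {x' : Fin n → Fin m → ℝ}
    (hx' : Feasible n m x') (hb : ∀ i, p i + (agentValue v x' i - agentValue v x i) ≤ b i) :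
    ∑ i, agentValue v x' i ≤ ∑ i, agentValue v x i := by
  by_contra! h
  have hrevenue : ∑ i, (p i + (agentValue v x' i - agentValue v x i)) =
      ∑ i, p i + (∑ i, agentValue v x' i - ∑ i, agentValue v x i) := by
    rw [sum_add_distrib, sum_sub_distrib]
  exact hPO ⟨x', fun i => p i + (agentValue v x' i - agentValue v x i), hx', hb,
    fun i => by linarith, by linarith, Or.inr (by linarith)⟩

end Outcome

lemma alloc_eq_of_dominates {m : ℕ} {b : Fin 2 → ℝ} {v x : Fin 2 → Fin m → ℝ} {p : Fin 2 → ℝ}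
    (hx : Feasible 2 m x) (hv : ∀ j, 0 ≤ v 0 j) (hpb : ∀ i, p i ≤ b i) (hIR : IR v x p)
    (hPO : PO b v x p) (hbud : ∑ j, v 1 j < b 1) (hdom : ∀ j, v 0 j < v 1 j) :
    ∀ j, x 0 j = 0 ∧ x 1 j = 1 := by
  let all : Fin 2 → Fin m → ℝ := fun i _ => if i = 1 then 1 else 0
  have hall : Feasible 2 m all :=
    ⟨fun i j => by fin_cases i <;> simp [all], fun j => by simp [all]⟩
  have hall0 : agentValue v all 0 = 0 := agentValue_eq_zero_of_alloc_eq_zero fun j => rfl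
  have hall1 : agentValue v all 1 = ∑ j, v 1 j := agentValue_eq_sum_of_alloc_eq_one fun j => rfl
  have hwelfare := hPO.sum_agentValue_le hall <| Fin.forall_fin_two.2
    ⟨by linarith [hpb 0, agentValue_nonneg hx hv], by linarith [hIR.1 1]⟩
  rw [Fin.sum_univ_two, Fin.sum_univ_two, hall0, hall1, zero_add] at hwelfare
  have hcol : ∀ j, x 0 j + x 1 j ≤ 1 := fun j => by simpa [Fin.sum_univ_two] using hx.2 j
  have hv1 : ∀ j, 0 < v 1 j := fun j => (hv j).trans_lt (hdom j)
  have hunsold : ∀ j, 0 ≤ v 1 j * (1 - x 0 j - x 1 j) := fun j =>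
    mul_nonneg (hv1 j).le (by linarith [hcol j])
  have hmisallocated : ∀ j, 0 ≤ x 0 j * (v 1 j - v 0 j) := fun j =>
    mul_nonneg (hx.1 0 j).1 (by linarith [hdom j])
  let loss : Fin m → ℝ := fun j => v 1 j * (1 - x 0 j - x 1 j) + x 0 j * (v 1 j - v 0 j)
  have hloss_nonneg : ∀ j, 0 ≤ loss j := fun j => add_nonneg (hunsold j) (hmisallocated j)
  have hloss_sum : ∑ j, loss j = 0 := by
    refine le_antisymm ?_ (sum_nonneg fun j _ => hloss_nonneg j)
    have : ∑ j, loss j = ∑ j, v 1 j - (agentValue v x 0 + agentValue v x 1) := by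
      simp only [agentValue, ← sum_add_distrib, ← sum_sub_distrib, loss]
      exact sum_congr rfl fun j _ => by ring
    linarith
  intro j
  have hzero := (sum_eq_zero_iff_of_nonneg fun j _ => hloss_nonneg j).1 hloss_sum j (mem_univ j)
  obtain ⟨hleft, hright⟩ := (add_eq_zero_iff_of_nonneg (hunsold j) (hmisallocated j)).1 hzero
  have hx0 : x 0 j = 0 := (mul_eq_zero.1 hright).resolve_right (by linarith [hdom j])
  have hx1 : 1 - x 0 j - x 1 j = 0 := (mul_eq_zero.1 hleft).resolve_left (hv1 j).ne'
  exact ⟨hx0, by linarith⟩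

section Mechanism

variable {m : ℕ} {b : Fin 2 → ℝ} {X : (Fin 2 → Fin m → ℝ) → Fin 2 → Fin m → ℝ}
  {P : (Fin 2 → Fin m → ℝ) → Fin 2 → ℝ}

lemma mechanism_alloc_eq_of_dominates (hX : ∀ v, (∀ i j, 0 ≤ v i j) → Feasible 2 m (X v))
    (hP : RespectsBudgets b P)
    (hIRPO : ∀ v, (∀ i j, 0 ≤ v i j) → IR v (X v) (P v) ∧ PO b v (X v) (P v))
    {v : Fin 2 → Fin m → ℝ} (hv : ∀ i j, 0 ≤ v i j) (hbud : ∑ j, v 1 j < b 1)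
    (hdom : ∀ j, v 0 j < v 1 j) :
    ∀ j, X v 0 j = 0 ∧ X v 1 j = 1 :=
  alloc_eq_of_dominates (hX v hv) (hv 0) (hP v hv) (hIRPO v hv).1 (hIRPO v hv).2 hbud hdom

lemma mechanism_payment_one_nonpos_of_report_zero
    (hX : ∀ v, (∀ i j, 0 ≤ v i j) → Feasible 2 m (X v)) (hP : RespectsBudgets b P)
    (hIC : IC X P) (hIRPO : ∀ v, (∀ i j, 0 ≤ v i j) → IR v (X v) (P v) ∧ PO b v (X v) (P v))
    {u : Fin 2 → Fin m → ℝ} (hu0 : u 0 = 0) (hu1 : ∀ j, 0 < u 1 j) (hbud : ∑ j, u 1 j < b 1) :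
    P u 1 ≤ 0 := by
  have hu : ∀ i j, 0 ≤ u i j := Fin.forall_fin_two.2 ⟨by simp [hu0], fun j => (hu1 j).le⟩
  have hwin : ∀ j, X u 1 j = 1 := fun j =>
    (mechanism_alloc_eq_of_dominates hX hP hIRPO hu hbud (by simpa [hu0] using hu1) j).2
  have hb1 : 0 < b 1 := (sum_nonneg fun j _ => (hu1 j).le).trans_lt hbud
  by_contra! hq
  set ε := min (P u 1) (b 1) / (m + 1) with hε
  have hε_pos : 0 < ε := div_pos (lt_min hq hb1) (by positivity)
  have hmε : m * ε < min (P u 1) (b 1) := by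
    have : ((m : ℝ) + 1) * ε = min (P u 1) (b 1) := by rw [hε]; field_simp
    linarith
  set u' := Function.update u 1 (fun _ => ε) with hu'
  have hu'0 : u' 0 = 0 := by simp [u', hu0]
  have hu'1 : u' 1 = fun _ => ε := Function.update_self 1 _ u
  have hsum' : ∑ j, u' 1 j = m * ε := by simp [hu'1]
  have hu'_nonneg : ∀ i j, 0 ≤ u' i j :=
    Fin.forall_fin_two.2 ⟨by simp [hu'0], by simp [hu'1, hε_pos.le]⟩
  have hwin' : ∀ j, X u' 1 j = 1 := fun j => (mechanism_alloc_eq_of_dominates hX hP hIRPO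
    hu'_nonneg (by linarith [min_le_right (P u 1) (b 1)])
    (by simpa [hu'0, hu'1] using fun _ => hε_pos) j).2
  have hdeviate := hIC u hu 1 (fun _ => ε) (fun _ => hε_pos.le)
  rw [← hu', agentValue_eq_sum_of_alloc_eq_one hwin,
    agentValue_eq_sum_of_alloc_eq_one hwin'] at hdeviate
  have hIR' := (hIRPO u' hu'_nonneg).1.1 1
  rw [agentValue_eq_sum_of_alloc_eq_one hwin', hsum'] at hIR'
  linarith [min_le_left (P u 1) (b 1)]

lemma mechanism_payment_zero_eq_zero_of_dominates
    (hX : ∀ v, (∀ i j, 0 ≤ v i j) → Feasible 2 m (X v)) (hP : RespectsBudgets b P)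
    (hIC : IC X P) (hIRPO : ∀ v, (∀ i j, 0 ≤ v i j) → IR v (X v) (P v) ∧ PO b v (X v) (P v))
    {v : Fin 2 → Fin m → ℝ} (hv : ∀ i j, 0 ≤ v i j) (hbud : ∑ j, v 1 j < b 1)
    (hdom : ∀ j, v 0 j < v 1 j) :
    P v 0 = 0 := by
  have hvalue : agentValue v (X v) 0 = 0 := agentValue_eq_zero_of_alloc_eq_zero fun j =>
    (mechanism_alloc_eq_of_dominates hX hP hIRPO hv hbud hdom j).1
  set u := Function.update v 0 0 with hu
  have hu0 : u 0 = 0 := Function.update_self 0 _ v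
  have hu1 : u 1 = v 1 := Function.update_of_ne (by decide) _ v
  have hu_nonneg : ∀ i j, 0 ≤ u i j := Fin.forall_fin_two.2 ⟨by simp [hu0], by simp [hu1, hv]⟩
  have hpay1 : P u 1 ≤ 0 := mechanism_payment_one_nonpos_of_report_zero hX hP hIC hIRPO hu0
    (by simpa [hu1] using fun j => (hv 0 j).trans_lt (hdom j)) (by rwa [hu1])
  have hrevenue : 0 ≤ P u 0 + P u 1 := by simpa [Fin.sum_univ_two] using (hIRPO u hu_nonneg).1.2
  have hdeviate := hIC u hu_nonneg 0 (v 0) (hv 0)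
  rw [hu, Function.update_idem, Function.update_eq_self] at hdeviate
  have hzero_value : ∀ x, agentValue u x 0 = 0 := fun x => by simp [agentValue, hu0]
  rw [hzero_value, hzero_value] at hdeviate
  linarith [(hIRPO v hv).1.1 0]

end Mechanism

theorem stmt2_general (b : Fin 2 → ℝ)
    (X : (Fin 2 → Fin 2 → ℝ) → Fin 2 → Fin 2 → ℝ)
    (P : (Fin 2 → Fin 2 → ℝ) → Fin 2 → ℝ)
    (hX : ∀ v : Fin 2 → Fin 2 → ℝ, (∀ i j, 0 ≤ v i j) → Feasible 2 2 (X v))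
    (hP : RespectsBudgets b P)
    (hIC : IC X P)
    (hIRPO : ∀ v : Fin 2 → Fin 2 → ℝ, (∀ i j, 0 ≤ v i j) →
      IR v (X v) (P v) ∧ PO b v (X v) (P v))
    (v : Fin 2 → Fin 2 → ℝ) (hv : ∀ i j, 0 ≤ v i j)
    (h1 : v 1 0 + v 1 1 < b 1) (h2 : v 0 0 < v 1 0) (h3 : v 0 1 < v 1 1) :
    X v 0 0 = 0 ∧ X v 0 1 = 0 ∧ X v 1 0 = 1 ∧ X v 1 1 = 1 ∧
      agentValue v (X v) 0 - P v 0 = 0 ∧ P v 0 = 0 := by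
  have hbud : ∑ j, v 1 j < b 1 := by rwa [Fin.sum_univ_two]
  have hdom : ∀ j, v 0 j < v 1 j := Fin.forall_fin_two.2 ⟨h2, h3⟩
  have halloc := mechanism_alloc_eq_of_dominates hX hP hIRPO hv hbud hdom
  have hpay := mechanism_payment_zero_eq_zero_of_dominates hX hP hIC hIRPO hv hbud hdom
  have hvalue : agentValue v (X v) 0 = 0 :=
    agentValue_eq_zero_of_alloc_eq_zero fun j => (halloc j).1
  exact ⟨(halloc 0).1, (halloc 1).1, (halloc 0).2, (halloc 1).2, by rw [hvalue, hpay, sub_zero],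
    hpay⟩

/-- Case 1 of the multi-dimensional analysis: with 2 agents and 2 divisible
items (index 0 = paper's agent/item 1, index 1 = paper's agent/item 2), if
`b 2 > v 2 1 + v 2 2`, `v 2 1 > v 1 1`, and `v 2 2 > v 1 2`, then every IR, PO, IC mechanism
gives both items to agent 2 and agent 1 has utility 0 (equivalently pays 0). -/
theorem stmt2 (b : Fin 2 → ℝ) (hb : ∀ i, 0 ≤ b i)
    (X : (Fin 2 → Fin 2 → ℝ) → Fin 2 → Fin 2 → ℝ)
    (P : (Fin 2 → Fin 2 → ℝ) → Fin 2 → ℝ)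
    (hX : ∀ v : Fin 2 → Fin 2 → ℝ, (∀ i j, 0 ≤ v i j) → Feasible 2 2 (X v))
    (hP : RespectsBudgets b P)
    (hIC : IC X P)
    (hIRPO : ∀ v : Fin 2 → Fin 2 → ℝ, (∀ i j, 0 ≤ v i j) →
      IR v (X v) (P v) ∧ PO b v (X v) (P v))
    (v : Fin 2 → Fin 2 → ℝ) (hv : ∀ i j, 0 ≤ v i j)
    (h1 : v 1 0 + v 1 1 < b 1) (h2 : v 0 0 < v 1 0) (h3 : v 0 1 < v 1 1) :
    X v 0 0 = 0 ∧ X v 0 1 = 0 ∧ X v 1 0 = 1 ∧ X v 1 1 = 1 ∧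
      agentValue v (X v) 0 - P v 0 = 0 ∧ P v 0 = 0 :=
  stmt2_general b X P hX hP hIC hIRPO v hv h1 h2 h3
end

section
/- Let M = (x, p) be a deterministic mechanism for 2 agents, 2 divisible items, multi-dimensional additive valuations, and public budgets b, that respects budgets, is incentive compatible, and whose outcome on every valuation profile is individually rational and Pareto optimal. Then for every valuation profile v satisfying b 2 > v 2 1 + v 2 2, v 1 1 > v 2 1, v 2 2 > v 1 2, and b 1 > v 1 1, the outcome satisfies x 1 1 = 1, x 1 2 = 0, x 2 1 = 0, x 2 2 = 1, and agent 1's utility is v 1 1 − v 2 1 (equivalently p 1 = v 2 1). -/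
open Finset

section Aux

variable {b : Fin 2 → ℝ}
variable {X : (Fin 2 → Fin 2 → ℝ) → Fin 2 → Fin 2 → ℝ}
variable {P : (Fin 2 → Fin 2 → ℝ) → Fin 2 → ℝ}

lemma upd_nonneg {v : Fin 2 → Fin 2 → ℝ} (hv : ∀ i j, 0 ≤ v i j) (i : Fin 2)
    {r : Fin 2 → ℝ} (hr : ∀ j, 0 ≤ r j) :
    ∀ i' j, 0 ≤ Function.update v i r i' j := by
  intro i' j
  rcases eq_or_ne i' i with h | h
  · subst h; rw [Function.update_self]; exact hr j
  · rw [Function.update_of_ne h]; exact hv i' j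

lemma pay_const (hIC : IC X P) {v : Fin 2 → Fin 2 → ℝ} (hv : ∀ i j, 0 ≤ v i j)
    (i : Fin 2) {r : Fin 2 → ℝ} (hr : ∀ j, 0 ≤ r j)
    (hrow : ∀ j, X (Function.update v i r) i j = X v i j) :
    P (Function.update v i r) i = P v i := by
  have h1 := hIC v hv i r hr
  have h2 := hIC (Function.update v i r) (upd_nonneg hv i hr) i (v i) (fun j => hv i j)
  rw [Function.update_idem, Function.update_eq_self] at h2
  have e1 : agentValue v (X (Function.update v i r)) i = agentValue v (X v) i := by
    unfold agentValue; exact Finset.sum_congr rfl (fun j _ => by rw [hrow j])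
  have e2 : agentValue (Function.update v i r) (X v) i
      = agentValue (Function.update v i r) (X (Function.update v i r)) i := by
    unfold agentValue; exact Finset.sum_congr rfl (fun j _ => by rw [hrow j])
  rw [e1] at h1
  rw [e2] at h2
  linarith

lemma welfare_ge
    (hIRPO : ∀ v : Fin 2 → Fin 2 → ℝ, (∀ i j, 0 ≤ v i j) →
      IR v (X v) (P v) ∧ PO b v (X v) (P v))
    {w : Fin 2 → Fin 2 → ℝ} (hw : ∀ i j, 0 ≤ w i j)
    {x' : Fin 2 → Fin 2 → ℝ} (hx' : Feasible 2 2 x')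
    (hb' : ∀ i, agentValue w x' i ≤ b i) :
    agentValue w x' 0 + agentValue w x' 1
      ≤ agentValue w (X w) 0 + agentValue w (X w) 1 := by
  obtain ⟨⟨hIR1, _⟩, hPO⟩ := hIRPO w hw
  by_contra hlt
  push_neg at hlt
  exact hPO ⟨x', fun i => P w i + (agentValue w x' i - agentValue w (X w) i), hx',
    fun i => by dsimp only; have h := hIR1 i; have := hb' i; linarith,
    fun i => by dsimp only; linarith,
    by rw [Fin.sum_univ_two, Fin.sum_univ_two]; linarith,
    Or.inr (by rw [Fin.sum_univ_two, Fin.sum_univ_two]; linarith)⟩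

lemma alloc_diag (hX : ∀ v : Fin 2 → Fin 2 → ℝ, (∀ i j, 0 ≤ v i j) → Feasible 2 2 (X v))
    (hIRPO : ∀ v : Fin 2 → Fin 2 → ℝ, (∀ i j, 0 ≤ v i j) →
      IR v (X v) (P v) ∧ PO b v (X v) (P v))
    {w : Fin 2 → Fin 2 → ℝ} (hw : ∀ i j, 0 ≤ w i j)
    (h0 : w 1 0 < w 0 0) (h1 : w 0 1 < w 1 1)
    (hb0 : w 0 0 ≤ b 0) (hb1 : w 1 1 ≤ b 1) :
    X w 0 0 = 1 ∧ X w 0 1 = 0 ∧ X w 1 0 = 0 ∧ X w 1 1 = 1 := by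
  have hx' : Feasible 2 2 ![![(1:ℝ), 0], ![0, 1]] := by
    refine ⟨fun i j => ?_, fun j => ?_⟩
    · fin_cases i <;> fin_cases j <;> norm_num
    · fin_cases j <;> simp [Fin.sum_univ_two]
  have hv'0 : agentValue w ![![(1:ℝ), 0], ![0, 1]] 0 = w 0 0 := by
    simp [agentValue, Fin.sum_univ_two]
  have hv'1 : agentValue w ![![(1:ℝ), 0], ![0, 1]] 1 = w 1 1 := by
    simp [agentValue, Fin.sum_univ_two]
  have key := welfare_ge hIRPO hw hx' (fun i => by
    rcases (by omega : i = 0 ∨ i = 1) with h | h <;> subst h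
    · rw [hv'0]; exact hb0
    · rw [hv'1]; exact hb1)
  rw [hv'0, hv'1] at key
  obtain ⟨hbox, hcol⟩ := hX w hw
  have c0 := hcol 0; rw [Fin.sum_univ_two] at c0
  have c1 := hcol 1; rw [Fin.sum_univ_two] at c1
  have B00 := hbox 0 0; have B01 := hbox 0 1; have B10 := hbox 1 0; have B11 := hbox 1 1
  have keyx : w 0 0 + w 1 1 ≤
      X w 0 0 * w 0 0 + X w 0 1 * w 0 1 + (X w 1 0 * w 1 0 + X w 1 1 * w 1 1) := by
    have e0 : agentValue w (X w) 0 = X w 0 0 * w 0 0 + X w 0 1 * w 0 1 := by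
      simp [agentValue, Fin.sum_univ_two]
    have e1 : agentValue w (X w) 1 = X w 1 0 * w 1 0 + X w 1 1 * w 1 1 := by
      simp [agentValue, Fin.sum_univ_two]
    rw [e0, e1] at key; exact key
  have p00 : (0:ℝ) ≤ (1 - X w 0 0) * (w 0 0 - w 1 0) :=
    mul_nonneg (by linarith [B00.2]) (by linarith)
  have p01 : (0:ℝ) ≤ (1 - X w 0 0 - X w 1 0) * w 1 0 :=
    mul_nonneg (by linarith) (hw 1 0)
  have p10 : (0:ℝ) ≤ (1 - X w 1 1) * (w 1 1 - w 0 1) :=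
    mul_nonneg (by linarith [B11.2]) (by linarith)
  have p11 : (0:ℝ) ≤ (1 - X w 0 1 - X w 1 1) * w 0 1 :=
    mul_nonneg (by linarith) (hw 0 1)
  have i0 : X w 0 0 * w 0 0 + X w 1 0 * w 1 0 ≤ w 0 0 := by nlinarith [p00, p01]
  have i1 : X w 0 1 * w 0 1 + X w 1 1 * w 1 1 ≤ w 1 1 := by nlinarith [p10, p11]
  have e0 : X w 0 0 * w 0 0 + X w 1 0 * w 1 0 = w 0 0 := by linarith
  have e1 : X w 0 1 * w 0 1 + X w 1 1 * w 1 1 = w 1 1 := by linarith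
  have hx00 : X w 0 0 = 1 := by
    have : 1 ≤ X w 0 0 := by nlinarith [p01, e0]
    linarith [B00.2]
  have hx11 : X w 1 1 = 1 := by
    have : 1 ≤ X w 1 1 := by nlinarith [p11, e1]
    linarith [B11.2]
  have hx10 : X w 1 0 = 0 := le_antisymm (by linarith) B10.1
  have hx01 : X w 0 1 = 0 := le_antisymm (by linarith) B01.1
  exact ⟨hx00, hx01, hx10, hx11⟩

lemma alloc_all1 (hX : ∀ v : Fin 2 → Fin 2 → ℝ, (∀ i j, 0 ≤ v i j) → Feasible 2 2 (X v))
    (hIRPO : ∀ v : Fin 2 → Fin 2 → ℝ, (∀ i j, 0 ≤ v i j) →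
      IR v (X v) (P v) ∧ PO b v (X v) (P v))
    {w : Fin 2 → Fin 2 → ℝ} (hw : ∀ i j, 0 ≤ w i j)
    (h0 : w 0 0 < w 1 0) (h1 : w 0 1 < w 1 1)
    (hb0 : 0 ≤ b 0) (hb1 : w 1 0 + w 1 1 ≤ b 1) :
    X w 0 0 = 0 ∧ X w 0 1 = 0 ∧ X w 1 0 = 1 ∧ X w 1 1 = 1 := by
  have hx' : Feasible 2 2 ![![(0:ℝ), 0], ![1, 1]] := by
    refine ⟨fun i j => ?_, fun j => ?_⟩
    · fin_cases i <;> fin_cases j <;> norm_num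
    · fin_cases j <;> simp [Fin.sum_univ_two]
  have hv'0 : agentValue w ![![(0:ℝ), 0], ![1, 1]] 0 = 0 := by
    simp [agentValue, Fin.sum_univ_two]
  have hv'1 : agentValue w ![![(0:ℝ), 0], ![1, 1]] 1 = w 1 0 + w 1 1 := by
    simp [agentValue, Fin.sum_univ_two]
  have key := welfare_ge hIRPO hw hx' (fun i => by
    rcases (by omega : i = 0 ∨ i = 1) with h | h <;> subst h
    · rw [hv'0]; exact hb0
    · rw [hv'1]; exact hb1)
  rw [hv'0, hv'1] at key
  obtain ⟨hbox, hcol⟩ := hX w hw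
  have c0 := hcol 0; rw [Fin.sum_univ_two] at c0
  have c1 := hcol 1; rw [Fin.sum_univ_two] at c1
  have B00 := hbox 0 0; have B01 := hbox 0 1; have B10 := hbox 1 0; have B11 := hbox 1 1
  have keyx : w 1 0 + w 1 1 ≤
      X w 0 0 * w 0 0 + X w 0 1 * w 0 1 + (X w 1 0 * w 1 0 + X w 1 1 * w 1 1) := by
    have e0 : agentValue w (X w) 0 = X w 0 0 * w 0 0 + X w 0 1 * w 0 1 := by
      simp [agentValue, Fin.sum_univ_two]
    have e1 : agentValue w (X w) 1 = X w 1 0 * w 1 0 + X w 1 1 * w 1 1 := by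
      simp [agentValue, Fin.sum_univ_two]
    rw [e0, e1] at key; linarith
  have p00 : (0:ℝ) ≤ (1 - X w 1 0) * (w 1 0 - w 0 0) :=
    mul_nonneg (by linarith [B10.2]) (by linarith)
  have p01 : (0:ℝ) ≤ (1 - X w 0 0 - X w 1 0) * w 0 0 :=
    mul_nonneg (by linarith) (hw 0 0)
  have p10 : (0:ℝ) ≤ (1 - X w 1 1) * (w 1 1 - w 0 1) :=
    mul_nonneg (by linarith [B11.2]) (by linarith)
  have p11 : (0:ℝ) ≤ (1 - X w 0 1 - X w 1 1) * w 0 1 :=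
    mul_nonneg (by linarith) (hw 0 1)
  have i0 : X w 0 0 * w 0 0 + X w 1 0 * w 1 0 ≤ w 1 0 := by nlinarith [p00, p01]
  have i1 : X w 0 1 * w 0 1 + X w 1 1 * w 1 1 ≤ w 1 1 := by nlinarith [p10, p11]
  have e0 : X w 0 0 * w 0 0 + X w 1 0 * w 1 0 = w 1 0 := by linarith
  have e1 : X w 0 1 * w 0 1 + X w 1 1 * w 1 1 = w 1 1 := by linarith
  have hx10 : X w 1 0 = 1 := by
    have : 1 ≤ X w 1 0 := by nlinarith [p01, e0]
    linarith [B10.2]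
  have hx11 : X w 1 1 = 1 := by
    have : 1 ≤ X w 1 1 := by nlinarith [p11, e1]
    linarith [B11.2]
  have hx00 : X w 0 0 = 0 := le_antisymm (by linarith) B00.1
  have hx01 : X w 0 1 = 0 := le_antisymm (by linarith) B01.1
  exact ⟨hx00, hx01, hx10, hx11⟩

end Aux

/-- Case 2 of the multi-dimensional analysis: with 2 agents and 2 divisible
items (index 0 = paper's agent/item 1, index 1 = paper's agent/item 2), if
`b 2 > v 2 1 + v 2 2`, `v 1 1 > v 2 1`, `v 2 2 > v 1 2`, and `b 1 > v 1 1`, then every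
IR, PO, IC mechanism gives item 1 to agent 1 and item 2 to agent 2, and agent 1's
utility is `v 1 1 − v 2 1` (equivalently `p 1 = v 2 1`). -/
theorem stmt3 (b : Fin 2 → ℝ) (hb : ∀ i, 0 ≤ b i)
    (X : (Fin 2 → Fin 2 → ℝ) → Fin 2 → Fin 2 → ℝ)
    (P : (Fin 2 → Fin 2 → ℝ) → Fin 2 → ℝ)
    (hX : ∀ v : Fin 2 → Fin 2 → ℝ, (∀ i j, 0 ≤ v i j) → Feasible 2 2 (X v))
    (hP : RespectsBudgets b P)
    (hIC : IC X P)
    (hIRPO : ∀ v : Fin 2 → Fin 2 → ℝ, (∀ i j, 0 ≤ v i j) →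
      IR v (X v) (P v) ∧ PO b v (X v) (P v))
    (v : Fin 2 → Fin 2 → ℝ) (hv : ∀ i j, 0 ≤ v i j)
    (h1 : v 1 0 + v 1 1 < b 1) (h2 : v 1 0 < v 0 0) (h3 : v 0 1 < v 1 1)
    (h4 : v 0 0 < b 0) :
    X v 0 0 = 1 ∧ X v 0 1 = 0 ∧ X v 1 0 = 0 ∧ X v 1 1 = 1 ∧
      agentValue v (X v) 0 - P v 0 = v 0 0 - v 1 0 ∧ P v 0 = v 1 0 := by
  have hv11b : v 1 1 ≤ b 1 := by have := hv 1 0; linarith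
  have hv11pos : 0 < v 1 1 := lt_of_le_of_lt (hv 0 1) h3
  have hv00pos : 0 < v 0 0 := lt_of_le_of_lt (hv 1 0) h2
  obtain ⟨a00, a01, a10, a11⟩ := alloc_diag hX hIRPO hv h2 h3 h4.le hv11b
  have hval0 : agentValue v (X v) 0 = v 0 0 := by
    simp [agentValue, Fin.sum_univ_two, a00, a01]
  -- Upper bound : P v 0 ≤ v 1 0
  have hub : P v 0 ≤ v 1 0 := by
    by_contra hgt
    push_neg at hgt
    set ε := min (v 0 0 - v 1 0) (P v 0 - v 1 0) / 2 with hεdef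
    have hε0 : 0 < ε := half_pos (lt_min (by linarith) (by linarith))
    have hεA : v 1 0 + ε < v 0 0 := by
      have := min_le_left (v 0 0 - v 1 0) (P v 0 - v 1 0); simp only [hεdef]; linarith
    have hεP : v 1 0 + ε < P v 0 := by
      have := min_le_right (v 0 0 - v 1 0) (P v 0 - v 1 0); simp only [hεdef]; linarith
    set r : Fin 2 → ℝ := ![v 1 0 + ε, v 0 1] with hrdef
    have hr0 : r 0 = v 1 0 + ε := rfl
    have hr1 : r 1 = v 0 1 := rfl
    have hrnn : ∀ j, 0 ≤ r j := by
      intro j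
      rcases (by omega : j = 0 ∨ j = 1) with h | h <;> subst h
      · rw [hr0]; have := hv 1 0; linarith
      · rw [hr1]; exact hv 0 1
    set v' := Function.update v 0 r with hv'def
    have E0 : v' 0 = r := Function.update_self 0 r v
    have E1 : v' 1 = v 1 := Function.update_of_ne (by decide) r v
    have hv'nn : ∀ i j, 0 ≤ v' i j := upd_nonneg hv 0 hrnn
    obtain ⟨c00, c01, c10, c11⟩ :=
      alloc_diag (b := b) hX hIRPO hv'nn
        (by rw [E0, E1, hr0]; linarith)
        (by rw [E0, E1, hr1]; exact h3)
        (by rw [E0, hr0]; linarith)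
        (by rw [E1]; exact hv11b)
    have hpc : P v' 0 = P v 0 := by
      apply pay_const hIC hv 0 hrnn
      intro j
      rcases (by omega : j = 0 ∨ j = 1) with h | h <;> subst h
      · rw [← hv'def, c00, a00]
      · rw [← hv'def, c01, a01]
    have hIR' := (hIRPO v' hv'nn).1.1 0
    have hval' : agentValue v' (X v') 0 = v 1 0 + ε := by
      rw [agentValue, Fin.sum_univ_two, c00, c01, E0, hr0, hr1]; ring
    rw [hval', hpc] at hIR'
    linarith
  -- Lower bound : v 1 0 ≤ P v 0
  have hlb : v 1 0 ≤ P v 0 := by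
    rcases eq_or_lt_of_le (hv 1 0) with hC | hC
    · -- v 1 0 = 0
      set r : Fin 2 → ℝ := ![v 0 0 / 2, 0] with hrdef
      have hr0 : r 0 = v 0 0 / 2 := rfl
      have hr1 : r 1 = (0:ℝ) := rfl
      have hrnn : ∀ j, 0 ≤ r j := by
        intro j
        rcases (by omega : j = 0 ∨ j = 1) with h | h <;> subst h
        · rw [hr0]; linarith
        · rw [hr1]
      set u := Function.update v 0 r with hudef
      have E0 : u 0 = r := Function.update_self 0 r v
      have E1 : u 1 = v 1 := Function.update_of_ne (by decide) r v
      have hunn : ∀ i j, 0 ≤ u i j := upd_nonneg hv 0 hrnn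
      obtain ⟨c00, c01, c10, c11⟩ :=
        alloc_diag (b := b) hX hIRPO hunn
          (by rw [E0, E1, hr0, ← hC]; linarith)
          (by rw [E0, E1, hr1]; exact hv11pos)
          (by rw [E0, hr0]; linarith)
          (by rw [E1]; exact hv11b)
      have hpc : P u 0 = P v 0 := by
        apply pay_const hIC hv 0 hrnn
        intro j
        rcases (by omega : j = 0 ∨ j = 1) with h | h <;> subst h
        · rw [← hudef, c00, a00]
        · rw [← hudef, c01, a01]
      -- agent 1's payment at u is ≤ 0
      have hQ : P u 1 ≤ 0 := by
        by_contra hQpos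
        push_neg at hQpos
        set δ := min (v 1 1) (P u 1) / 2 with hδdef
        have hδ0 : 0 < δ := half_pos (lt_min hv11pos hQpos)
        have hδv : δ < v 1 1 := by
          have := min_le_left (v 1 1) (P u 1); simp only [hδdef]; linarith
        have hδQ : δ < P u 1 := by
          have := min_le_right (v 1 1) (P u 1); simp only [hδdef]; linarith
        set s : Fin 2 → ℝ := ![0, δ] with hsdef
        have hs0 : s 0 = (0:ℝ) := rfl
        have hs1 : s 1 = δ := rfl
        have hsnn : ∀ j, 0 ≤ s j := by
          intro j
          rcases (by omega : j = 0 ∨ j = 1) with h | h <;> subst h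
          · rw [hs0]
          · rw [hs1]; linarith
        set u' := Function.update u 1 s with hu'def
        have F0 : u' 0 = u 0 := Function.update_of_ne (by decide) s u
        have F1 : u' 1 = s := Function.update_self 1 s u
        have hu'nn : ∀ i j, 0 ≤ u' i j := upd_nonneg hunn 1 hsnn
        obtain ⟨d00, d01, d10, d11⟩ :=
          alloc_diag (b := b) hX hIRPO hu'nn
            (by rw [F0, F1, E0, hs0, hr0]; linarith)
            (by rw [F0, F1, E0, hs1, hr1]; exact hδ0)
            (by rw [F0, E0, hr0]; linarith)
            (by rw [F1, hs1]; linarith)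
        have hpc' : P u' 1 = P u 1 := by
          apply pay_const hIC hunn 1 hsnn
          intro j
          rcases (by omega : j = 0 ∨ j = 1) with h | h <;> subst h
          · rw [← hu'def, d10, c10]
          · rw [← hu'def, d11, c11]
        have hIR' := (hIRPO u' hu'nn).1.1 1
        have hval' : agentValue u' (X u') 1 = δ := by
          rw [agentValue, Fin.sum_univ_two, d10, d11, F1, hs0, hs1]; ring
        rw [hval', hpc'] at hIR'
        linarith
      have hsum := (hIRPO u hunn).1.2
      rw [Fin.sum_univ_two] at hsum
      rw [← hC, ← hpc]
      linarith
    · -- 0 < v 1 0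
      set r0 : Fin 2 → ℝ := ![0, 0] with hr0def
      have hr00 : r0 0 = (0:ℝ) := rfl
      have hr01 : r0 1 = (0:ℝ) := rfl
      have hr0nn : ∀ j, 0 ≤ r0 j := by
        intro j
        rcases (by omega : j = 0 ∨ j = 1) with h | h <;> subst h <;> simp [hr0def]
      set u0 := Function.update v 0 r0 with hu0def
      have E0 : u0 0 = r0 := Function.update_self 0 r0 v
      have E1 : u0 1 = v 1 := Function.update_of_ne (by decide) r0 v
      have hu0nn : ∀ i j, 0 ≤ u0 i j := upd_nonneg hv 0 hr0nn
      obtain ⟨c00, c01, c10, c11⟩ :=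
        alloc_all1 (b := b) hX hIRPO hu0nn
          (by rw [E0, E1, hr00]; exact hC)
          (by rw [E0, E1, hr01]; exact hv11pos)
          (hb 0)
          (by rw [E1]; linarith)
      -- agent 1's payment at u0 is ≤ 0
      have hQ : P u0 1 ≤ 0 := by
        by_contra hQpos
        push_neg at hQpos
        have hb1pos : 0 < b 1 := by have := hv 1 0; have := hv 1 1; linarith
        set δ := min (b 1) (P u0 1) / 4 with hδdef
        have hδ0 : 0 < δ := by
          have := lt_min hb1pos hQpos
          simp only [hδdef]; linarith
        have hδb : δ + δ ≤ b 1 := by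
          have := min_le_left (b 1) (P u0 1); simp only [hδdef]; linarith
        have hδQ : δ + δ < P u0 1 := by
          have := min_le_right (b 1) (P u0 1); simp only [hδdef]; linarith
        set s : Fin 2 → ℝ := ![δ, δ] with hsdef
        have hs0 : s 0 = δ := rfl
        have hs1 : s 1 = δ := rfl
        have hsnn : ∀ j, 0 ≤ s j := by
          intro j
          rcases (by omega : j = 0 ∨ j = 1) with h | h <;> subst h <;>
            simp [hsdef] <;> linarith
        set u0' := Function.update u0 1 s with hu0'def
        have F0 : u0' 0 = u0 0 := Function.update_of_ne (by decide) s u0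
        have F1 : u0' 1 = s := Function.update_self 1 s u0
        have hu0'nn : ∀ i j, 0 ≤ u0' i j := upd_nonneg hu0nn 1 hsnn
        obtain ⟨d00, d01, d10, d11⟩ :=
          alloc_all1 (b := b) hX hIRPO hu0'nn
            (by rw [F0, F1, E0, hs0, hr00]; exact hδ0)
            (by rw [F0, F1, E0, hs1, hr01]; exact hδ0)
            (hb 0)
            (by rw [F1, hs0, hs1]; exact hδb)
        have hpc' : P u0' 1 = P u0 1 := by
          apply pay_const hIC hu0nn 1 hsnn
          intro j
          rcases (by omega : j = 0 ∨ j = 1) with h | h <;> subst h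
          · rw [← hu0'def, d10, c10]
          · rw [← hu0'def, d11, c11]
        have hIR' := (hIRPO u0' hu0'nn).1.1 1
        have hval' : agentValue u0' (X u0') 1 = δ + δ := by
          rw [agentValue, Fin.sum_univ_two, d10, d11, F1, hs0, hs1]; ring
        rw [hval', hpc'] at hIR'
        linarith
      have hsum := (hIRPO u0 hu0nn).1.2
      rw [Fin.sum_univ_two] at hsum
      have hL : 0 ≤ P u0 0 := by linarith
      -- threshold argument
      have hth : ∀ t : ℝ, 0 ≤ t → t < v 1 0 → t ≤ P v 0 - P u0 0 := by
        intro t ht0 htC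
        set rt : Fin 2 → ℝ := ![t, 0] with hrtdef
        have hrt0 : rt 0 = t := rfl
        have hrt1 : rt 1 = (0:ℝ) := rfl
        have hrtnn : ∀ j, 0 ≤ rt j := by
          intro j
          rcases (by omega : j = 0 ∨ j = 1) with h | h <;> subst h
          · rw [hrt0]; exact ht0
          · rw [hrt1]
        set ut := Function.update v 0 rt with hutdef
        have G0 : ut 0 = rt := Function.update_self 0 rt v
        have G1 : ut 1 = v 1 := Function.update_of_ne (by decide) rt v
        have hutnn : ∀ i j, 0 ≤ ut i j := upd_nonneg hv 0 hrtnn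
        obtain ⟨e00, e01, e10, e11⟩ :=
          alloc_all1 (b := b) hX hIRPO hutnn
            (by rw [G0, G1, hrt0]; exact htC)
            (by rw [G0, G1, hrt1]; exact hv11pos)
            (hb 0)
            (by rw [G1]; linarith)
        have hidem : Function.update u0 0 rt = ut := by
          rw [hu0def, hutdef, Function.update_idem]
        have hpct : P ut 0 = P u0 0 := by
          rw [← hidem]
          apply pay_const hIC hu0nn 0 hrtnn
          intro j
          rw [hidem]
          rcases (by omega : j = 0 ∨ j = 1) with h | h <;> subst h
          · rw [e00, c00]
          · rw [e01, c01]
        have hic := hIC ut hutnn 0 (v 0) (fun j => hv 0 j)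
        have hback : Function.update ut 0 (v 0) = v := by
          rw [hutdef, Function.update_idem, Function.update_eq_self]
        rw [hback] at hic
        have hval1 : agentValue ut (X v) 0 = t := by
          rw [agentValue, Fin.sum_univ_two, a00, a01, G0, hrt0, hrt1]; ring
        have hval2 : agentValue ut (X ut) 0 = 0 := by
          rw [agentValue, Fin.sum_univ_two, e00, e01]; ring
        rw [hval1, hval2, hpct] at hic
        linarith
      by_contra hlt
      push_neg at hlt
      have hth' := hth (max 0 ((P v 0 - P u0 0 + v 1 0) / 2)) (le_max_left _ _)
        (max_lt hC (by linarith))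
      have : P v 0 - P u0 0 < (P v 0 - P u0 0 + v 1 0) / 2 := by linarith
      have := le_max_right (0:ℝ) ((P v 0 - P u0 0 + v 1 0) / 2)
      linarith
  have hp : P v 0 = v 1 0 := le_antisymm hub hlb
  exact ⟨a00, a01, a10, a11, by rw [hval0, hp], hp⟩
end

section
/- In the setting with 2 agents, 2 divisible items, multi-dimensional additive valuations, and budgets b, assume v 1 1 > v 2 1, v 1 2 > v 2 2, b 1 > v 1 1, and v 1 1 * v 2 2 > v 1 2 * v 2 1. Then every outcome (x, p) that respects budgets, is individually rational, and is Pareto optimal satisfies: if p 1 < b 1 then x 1 1 = 1 and x 1 2 = 1, and if p 1 = b 1 then x 1 1 = 1 and x 1 2 > 0. -/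
/-!
Both conclusions come from Pareto optimality through local reallocations that keep every payment
within budget: an agent with slack budget who values an item more than the other agent can buy more
of it, and agent 0's comparative advantage in item 0 (`v 0 1 * v 1 0 < v 0 0 * v 1 1`) makes a swap
of item 0 against item 1 strictly profitable for agent 1 whenever agent 0 holds some of item 1.
When agent 0's budget is exhausted, `b 0 > v 0 0` and individual rationality force it to hold some
of item 1.
-/

open Finset

lemma exists_pos_mul_le_and_mul_le {a b c d : ℝ} (ha : 0 ≤ a) (hb : 0 ≤ b) (hc : 0 < c)
    (hd : 0 < d) : ∃ t, 0 < t ∧ t * a ≤ c ∧ t * b ≤ d := by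
  obtain ⟨s, hs, hsa⟩ := exists_pos_mul_lt hc a
  obtain ⟨r, hr, hrb⟩ := exists_pos_mul_lt hd b
  refine ⟨min s r, lt_min hs hr, ?_, ?_⟩
  · nlinarith [mul_le_mul_of_nonneg_right (min_le_left s r) ha]
  · nlinarith [mul_le_mul_of_nonneg_right (min_le_right s r) hb]

section Reallocation

variable {n m : ℕ}

def withColumn (x : Fin n → Fin m → ℝ) (j : Fin m) (y : Fin n → ℝ) : Fin n → Fin m → ℝ :=
  fun i => Function.update (x i) j (y i)

@[simp]
lemma withColumn_apply_self (x : Fin n → Fin m → ℝ) (j : Fin m) (y : Fin n → ℝ) (i : Fin n) :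
    withColumn x j y i j = y i := by
  simp [withColumn]

@[simp]
lemma withColumn_apply_of_ne (x : Fin n → Fin m → ℝ) {j k : Fin m} (y : Fin n → ℝ) (i : Fin n)
    (hk : k ≠ j) : withColumn x j y i k = x i k := by
  simp [withColumn, hk]

lemma agentValue_withColumn (v x : Fin n → Fin m → ℝ) (j : Fin m) (y : Fin n → ℝ) (i : Fin n) :
    agentValue v (withColumn x j y) i = agentValue v x i + (y i - x i j) * v i j := by
  have hsplit : ∀ k, withColumn x j y i k * v i k =
      x i k * v i k + if k = j then (y i - x i j) * v i j else 0 := by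
    intro k
    by_cases hk : k = j
    · subst hk; simp only [withColumn_apply_self, if_true]; ring
    · simp [hk]
  simp only [agentValue, hsplit, sum_add_distrib, sum_ite_eq', mem_univ, if_true]

lemma Feasible.withColumn {x : Fin n → Fin m → ℝ} (hx : Feasible n m x) (j : Fin m)
    {y : Fin n → ℝ} (hy : ∀ i, 0 ≤ y i) (hsum : ∑ i, y i ≤ 1) :
    Feasible n m (withColumn x j y) := by
  refine ⟨fun i k => ?_, fun k => ?_⟩ <;> by_cases hk : k = j
  · subst hk
    have hyi : y i ≤ 1 := (single_le_sum (fun i _ => hy i) (mem_univ i)).trans hsum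
    exact ⟨by simpa using hy i, by simpa using hyi⟩
  · simpa [hk] using hx.1 i k
  · subst hk; simpa using hsum
  · simpa [hk] using hx.2 k

end Reallocation

section ParetoOptimality

variable {n m : ℕ} {b p p' : Fin n → ℝ} {v x x' : Fin n → Fin m → ℝ}

lemma PO.not_revenue_lt (hPO : PO b v x p) (hx' : Feasible n m x') (hp' : ∀ i, p' i ≤ b i)
    (hu : ∀ i, agentValue v x i - p i ≤ agentValue v x' i - p' i) :
    ¬ ∑ i, p i < ∑ i, p' i :=
  fun hlt => hPO ⟨x', p', hx', hp', hu, hlt.le, Or.inr hlt⟩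

lemma PO.not_agentValue_lt (hPO : PO b v x p) (hbud : ∀ i, p i ≤ b i) (hx' : Feasible n m x')
    (hle : ∀ i, agentValue v x i ≤ agentValue v x' i) (i : Fin n) :
    ¬ agentValue v x i < agentValue v x' i :=
  fun hlt => hPO ⟨x', p, hx', hbud, fun k => sub_le_sub_right (hle k) _, le_rfl,
    Or.inl ⟨i, sub_lt_sub_right hlt _⟩⟩

end ParetoOptimality

section TwoAgents

variable {m : ℕ} {b p : Fin 2 → ℝ} {v x : Fin 2 → Fin m → ℝ}

lemma Feasible.column_sum_le_one (hx : Feasible 2 m x) (j : Fin m) : x 0 j + x 1 j ≤ 1 := by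
  simpa only [Fin.sum_univ_two] using hx.2 j

/-- Agent 0 buys `ε` more of item `j` at price `v 0 j`, taking it from agent 1 (who is refunded
at price `v 1 j`) only as far as it is not unallocated; this strictly raises revenue. -/
theorem PO.share_eq_one_of_value_lt (hPO : PO b v x p) (hx : Feasible 2 m x)
    (hbud : ∀ i, p i ≤ b i) {j : Fin m} (hv : 0 ≤ v 1 j) (hj : v 1 j < v 0 j) (hp : p 0 < b 0) :
    x 0 j = 1 := by
  by_contra hne
  have hx0 : x 0 j < 1 := (hx.1 0 j).2.lt_of_ne hne
  obtain ⟨ε, hε, hε1, hεb⟩ := exists_pos_mul_le_and_mul_le zero_le_one (hv.trans hj.le)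
    (sub_pos.2 hx0) (sub_pos.2 hp)
  set δ := min ε (x 1 j)
  have hδ : 0 ≤ δ := le_min hε.le (hx.1 1 j).1
  have hδv : δ * v 1 j ≤ ε * v 1 j := mul_le_mul_of_nonneg_right (min_le_left _ _) hv
  have hsum := hx.column_sum_le_one j
  have hx' : Feasible 2 m (withColumn x j ![x 0 j + ε, x 1 j - δ]) := by
    refine hx.withColumn j (Fin.forall_fin_two.2 ⟨?_, ?_⟩) ?_ <;>
      simp only [Fin.sum_univ_two, Matrix.cons_val_zero, Matrix.cons_val_one,
        Matrix.cons_val_fin_one]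
    · linarith [(hx.1 0 j).1]
    · linarith [min_le_right ε (x 1 j)]
    · rcases min_cases ε (x 1 j) with h | h <;> linarith
  refine hPO.not_revenue_lt hx' (p' := ![p 0 + ε * v 0 j, p 1 - δ * v 1 j]) ?_ ?_ ?_ <;>
    simp only [Fin.forall_fin_two, Fin.sum_univ_two, Matrix.cons_val_zero, Matrix.cons_val_one,
      Matrix.cons_val_fin_one, agentValue_withColumn]
  · constructor <;> linarith [hbud 1, mul_nonneg hδ hv]
  · constructor <;> linarith
  · nlinarith

/-- Agent 0 trades `t * v 0 k` of item `j` for `t * v 0 j` of item `k` with agent 1: agent 0 is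
indifferent, and agent 1 gains at least `t * (v 0 j * v 1 k - v 0 k * v 1 j) > 0`. -/
theorem PO.share_eq_one_of_comparative_advantage (hPO : PO b v x p) (hx : Feasible 2 m x)
    (hbud : ∀ i, p i ≤ b i) {j k : Fin m} (hk : 0 < x 0 k) (hv0j : 0 ≤ v 0 j) (hv0k : 0 ≤ v 0 k)
    (hv1j : 0 ≤ v 1 j) (hadv : v 0 k * v 1 j < v 0 j * v 1 k) : x 0 j = 1 := by
  have hkj : k ≠ j := by rintro rfl; exact lt_irrefl _ hadv
  by_contra hne
  have hx0 : x 0 j < 1 := (hx.1 0 j).2.lt_of_ne hne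
  obtain ⟨t, ht, htj, htk⟩ := exists_pos_mul_le_and_mul_le hv0k hv0j (sub_pos.2 hx0) hk
  set δ := min (t * v 0 k) (x 1 j)
  have hδv : δ * v 1 j ≤ t * v 0 k * v 1 j := mul_le_mul_of_nonneg_right (min_le_left _ _) hv1j
  have hsumj := hx.column_sum_le_one j
  have hsumk := hx.column_sum_le_one k
  have hx' : Feasible 2 m (withColumn (withColumn x j ![x 0 j + t * v 0 k, x 1 j - δ]) k
      ![x 0 k - t * v 0 j, x 1 k + t * v 0 j]) := by
    refine (hx.withColumn j (Fin.forall_fin_two.2 ⟨?_, ?_⟩) ?_).withColumn k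
      (Fin.forall_fin_two.2 ⟨?_, ?_⟩) ?_ <;>
      simp only [Fin.sum_univ_two, Matrix.cons_val_zero, Matrix.cons_val_one,
        Matrix.cons_val_fin_one]
    · nlinarith [(hx.1 0 j).1]
    · linarith [min_le_right (t * v 0 k) (x 1 j)]
    · rcases min_cases (t * v 0 k) (x 1 j) with h | h <;> linarith
    · linarith
    · nlinarith [(hx.1 1 k).1]
    · linarith
  refine hPO.not_agentValue_lt hbud hx' ?_ 1 ?_ <;>
    simp only [Fin.forall_fin_two, Matrix.cons_val_zero, Matrix.cons_val_one,
      Matrix.cons_val_fin_one, agentValue_withColumn, withColumn_apply_of_ne _ _ _ hkj]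
  · constructor <;> nlinarith
  · nlinarith

end TwoAgents

lemma IR.share_pos_of_value_lt_payment {n : ℕ} {v x : Fin n → Fin 2 → ℝ} {p : Fin n → ℝ}
    (hIR : IR v x p) (hx : Feasible n 2 x) {i : Fin n} (hv : 0 ≤ v i 0) (hp : v i 0 < p i) :
    0 < x i 1 := by
  by_contra! hle
  have hx1 : x i 1 = 0 := le_antisymm hle (hx.1 i 1).1
  have hIRi := hIR.1 i
  simp only [agentValue, Fin.sum_univ_two, hx1, zero_mul, add_zero] at hIRi
  nlinarith [mul_le_mul_of_nonneg_right (hx.1 i 0).2 hv]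

theorem stmt4_general (v : Fin 2 → Fin 2 → ℝ) (b : Fin 2 → ℝ)
    (x : Fin 2 → Fin 2 → ℝ) (p : Fin 2 → ℝ)
    (hv : ∀ i j, 0 ≤ v i j)
    (hx : Feasible 2 2 x) (hbud : ∀ i, p i ≤ b i)
    (hIR : IR v x p) (hPO : PO b v x p)
    (h1 : v 1 0 < v 0 0) (h2 : v 1 1 < v 0 1) (h3 : v 0 0 < b 0)
    (h4 : v 0 1 * v 1 0 < v 0 0 * v 1 1) :
    (p 0 < b 0 → x 0 0 = 1 ∧ x 0 1 = 1) ∧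
      (p 0 = b 0 → x 0 0 = 1 ∧ 0 < x 0 1) := by
  refine ⟨fun hp => ⟨hPO.share_eq_one_of_value_lt hx hbud (hv 1 0) h1 hp,
    hPO.share_eq_one_of_value_lt hx hbud (hv 1 1) h2 hp⟩, fun hp => ?_⟩
  have hx01 : 0 < x 0 1 := hIR.share_pos_of_value_lt_payment hx (hv 0 0) (hp ▸ h3)
  exact ⟨hPO.share_eq_one_of_comparative_advantage hx hbud hx01 (hv 0 0) (hv 0 1) (hv 1 0) h4,
    hx01⟩

/-- Lemma on Case 3: with 2 agents and 2 divisible items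
(index 0 = paper's agent/item 1, index 1 = paper's agent/item 2), assume
`v 1 1 > v 2 1`, `v 1 2 > v 2 2`, `b 1 > v 1 1`, and `v 1 1 * v 2 2 > v 1 2 * v 2 1`.
Then in every IR and PO outcome respecting budgets: if `p 1 < b 1` then
`x 1 1 = 1` and `x 1 2 = 1`, and if `p 1 = b 1` then `x 1 1 = 1` and `x 1 2 > 0`. -/
theorem stmt4 (v : Fin 2 → Fin 2 → ℝ) (b : Fin 2 → ℝ)
    (x : Fin 2 → Fin 2 → ℝ) (p : Fin 2 → ℝ)
    (hv : ∀ i j, 0 ≤ v i j) (hb : ∀ i, 0 ≤ b i)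
    (hx : Feasible 2 2 x) (hbud : ∀ i, p i ≤ b i)
    (hIR : IR v x p) (hPO : PO b v x p)
    (h1 : v 1 0 < v 0 0) (h2 : v 1 1 < v 0 1) (h3 : v 0 0 < b 0)
    (h4 : v 0 1 * v 1 0 < v 0 0 * v 1 1) :
    (p 0 < b 0 → x 0 0 = 1 ∧ x 0 1 = 1) ∧
      (p 0 = b 0 → x 0 0 = 1 ∧ 0 < x 0 1) :=
  stmt4_general v b x p hv hx hbud hIR hPO h1 h2 h3 h4
end

section
/- Let M = (x, p) be a deterministic mechanism for 2 agents, 2 divisible items, multi-dimensional additive valuations, and public budgets b, that respects budgets, is incentive compatible, and whose outcome on every valuation profile is individually rational and Pareto optimal. Then for every valuation profile v satisfying b 2 > v 2 1 + v 2 2, v 1 1 > v 2 1, v 1 2 > v 2 2, b 1 > v 1 1, v 1 1 * v 2 2 > v 1 2 * v 2 1, and v 2 1 + v 2 2 > b 1, the outcome satisfies p 1 = b 1 and x 1 2 = (b 1 − v 2 1) / v 2 2 < 1. -/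
open Finset

/-!
Fix agent 1's report `w`, whose budget is slack. Pareto optimality then denies agent 0 any item
that agent 1 values more, so each report `s • w` with `s < 1` is worthless to agent 0. Since
agent 1 could claim every item at a negligible price, agent 0 never receives money, and incentive
compatibility of the types `s • w` forces agent 0 to pay at least `w`'s value of any bundle it
gets. In Case 3 agent 0 receives all of item 0, so this bound and `b 0 < w 0 + w 1` exclude it
receiving all of item 1, and Pareto optimality makes its budget bind. The reverse inequality
`b 0 - w 0 ≤ w 1 * x 0 1` comes from incentive compatibility against the reports `(e, 0)` with
`e` just above `w 0`, and `(v 0 0, w 1 + δ)`.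
-/

open Filter Topology

lemma exists_pos_mul_le_and_mul_le_s5 {A A' s s' : ℝ} (hA : 0 < A) (hA' : 0 < A') :
    ∃ ε > 0, ε * s ≤ A ∧ ε * s' ≤ A' := by
  have small : ∀ {t B : ℝ}, 0 < B → ∀ᶠ ε in 𝓝[>] (0 : ℝ), ε * t ≤ B := fun {t _} hB =>
    ((continuous_mul_const t).tendsto' 0 0 (zero_mul t)).mono_left nhdsWithin_le_nhds
      |>.eventually_le_const hB
  exact (eventually_mem_nhdsWithin.and ((small hA).and (small hA'))).exists

section Allocation

variable {n m : ℕ}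

def singleColumn (j : Fin m) (d : Fin n → ℝ) : Fin n → Fin m → ℝ :=
  fun a => Pi.single j (d a)

lemma agentValue_add (u x y : Fin n → Fin m → ℝ) (a : Fin n) :
    agentValue u (x + y) a = agentValue u x a + agentValue u y a := by
  simp only [agentValue, Pi.add_apply, add_mul, Finset.sum_add_distrib]

lemma agentValue_singleColumn (u : Fin n → Fin m → ℝ) (j : Fin m) (d : Fin n → ℝ) (a : Fin n) :
    agentValue u (singleColumn j d) a = d a * u a j := by
  simp [agentValue, singleColumn, Pi.single_apply]

lemma agentValue_le_sum {u x : Fin n → Fin m → ℝ} (hx : Feasible n m x) {a : Fin n}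
    (hu : ∀ j, 0 ≤ u a j) : agentValue u x a ≤ ∑ j, u a j :=
  Finset.sum_le_sum fun j _ => mul_le_of_le_one_left (hu j) (hx.1 a j).2

lemma Feasible.add_singleColumn {x : Fin n → Fin m → ℝ} (hx : Feasible n m x) {j : Fin m}
    {d : Fin n → ℝ} (h0 : ∀ a, 0 ≤ x a j + d a) (h1 : ∀ a, x a j + d a ≤ 1)
    (hsum : ∑ a, x a j + ∑ a, d a ≤ 1) : Feasible n m (x + singleColumn j d) := by
  refine ⟨fun a c => ?_, fun c => ?_⟩
  · rcases eq_or_ne c j with rfl | hc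
    · simpa [singleColumn] using ⟨h0 a, h1 a⟩
    · simpa [singleColumn, hc] using hx.1 a c
  · rcases eq_or_ne c j with rfl | hc
    · simpa [singleColumn, Finset.sum_add_distrib] using hsum
    · simpa [singleColumn, hc] using hx.2 c

-- `t` units of item `j` move from agent `k` to agent `i`.
def transfer (k i : Fin n) (j : Fin m) (t : ℝ) : Fin n → Fin m → ℝ :=
  singleColumn j (Pi.single i t - Pi.single k t)

section Transfer

variable (u : Fin n → Fin m → ℝ) {k i : Fin n} (j : Fin m) (t : ℝ)

lemma agentValue_transfer_target (hik : i ≠ k) : agentValue u (transfer k i j t) i = t * u i j := by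
  simp [transfer, agentValue_singleColumn, hik]

lemma agentValue_transfer_source (hik : i ≠ k) :
    agentValue u (transfer k i j t) k = -(t * u k j) := by
  simp [transfer, agentValue_singleColumn, hik.symm]

lemma agentValue_transfer_of_ne {a : Fin n} (hai : a ≠ i) (hak : a ≠ k) :
    agentValue u (transfer k i j t) a = 0 := by
  simp [transfer, agentValue_singleColumn, hai, hak]

end Transfer

lemma Feasible.add_transfer {x : Fin n → Fin m → ℝ} (hx : Feasible n m x) {k i : Fin n}
    (hik : i ≠ k) {j : Fin m} {t : ℝ} (ht : 0 ≤ t) (htx : t ≤ x k j) :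
    Feasible n m (x + transfer k i j t) := by
  have hxik : x i j + x k j ≤ 1 := (Finset.add_le_sum (fun a _ => (hx.1 a j).1)
    (Finset.mem_univ i) (Finset.mem_univ k) hik).trans (hx.2 j)
  refine hx.add_singleColumn (fun a => ?_) (fun a => ?_) (by simpa using hx.2 j)
  · obtain rfl | hai := eq_or_ne a i
    · simpa [hik] using add_nonneg (hx.1 a j).1 ht
    obtain rfl | hak := eq_or_ne a k
    · simpa [hai.symm] using htx
    simpa [hai, hak] using (hx.1 a j).1
  · obtain rfl | hai := eq_or_ne a i
    · simpa [hik] using show x a j + t ≤ 1 by linarith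
    obtain rfl | hak := eq_or_ne a k
    · simpa [hai.symm] using show x a j - t ≤ 1 by linarith [(hx.1 a j).2]
    simpa [hai, hak] using (hx.1 a j).2

lemma IR.payment_le {u x : Fin n → Fin m → ℝ} {p : Fin n → ℝ} (h : IR u x p) (a : Fin n) :
    p a ≤ agentValue u x a :=
  sub_nonneg.1 (h.1 a)

end Allocation

namespace PO

variable {n m : ℕ} {b : Fin n → ℝ} {u x : Fin n → Fin m → ℝ} {p : Fin n → ℝ}

lemma false_of_improvement (hPO : PO b u x p) {x' : Fin n → Fin m → ℝ} {e : Fin n → ℝ}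
    (hx' : Feasible n m x') (hb : ∀ a, p a + e a ≤ b a) (he : ∑ a, e a = 0)
    (hle : ∀ a, agentValue u x a + e a ≤ agentValue u x' a)
    (hlt : ∃ a, agentValue u x a + e a < agentValue u x' a) : False := by
  refine hPO ⟨x', p + e, hx', hb, fun a => ?_, ?_, Or.inl ?_⟩
  · simp only [Pi.add_apply]; linarith [hle a]
  · simp [Finset.sum_add_distrib, he]
  · obtain ⟨a, ha⟩ := hlt
    exact ⟨a, by simp only [Pi.add_apply]; linarith⟩

lemma sum_eq_one (hPO : PO b u x p) (hx : Feasible n m x) (hb : ∀ a, p a ≤ b a) {i : Fin n}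
    {j : Fin m} (hij : 0 < u i j) : ∑ a, x a j = 1 := by
  by_contra hne
  set ε := 1 - ∑ a, x a j
  have hε : 0 < ε := sub_pos.2 ((hx.2 j).lt_of_ne hne)
  have hxi : x i j ≤ ∑ a, x a j :=
    Finset.single_le_sum (fun a _ => (hx.1 a j).1) (Finset.mem_univ i)
  have hx' : Feasible n m (x + singleColumn j (Pi.single i ε)) := by
    refine hx.add_singleColumn (fun a => ?_) (fun a => ?_) (by simp [ε])
    · rcases eq_or_ne a i with rfl | ha
      · simpa using add_nonneg (hx.1 a j).1 hε.le
      · simpa [ha] using (hx.1 a j).1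
    · rcases eq_or_ne a i with rfl | ha
      · rw [Pi.single_eq_same]; linarith
      · simpa [ha] using (hx.1 a j).2
  refine hPO.false_of_improvement (e := 0) hx' (by simpa using hb) (by simp) (fun a => ?_) ⟨i, ?_⟩
  · rcases eq_or_ne a i with rfl | ha
    · simpa [agentValue_add, agentValue_singleColumn] using (mul_pos hε hij).le
    · simp [agentValue_add, agentValue_singleColumn, ha]
  · simpa [agentValue_add, agentValue_singleColumn] using mul_pos hε hij

lemma eq_zero_of_lt (hPO : PO b u x p) (hx : Feasible n m x) (hb : ∀ a, p a ≤ b a)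
    {i k : Fin n} {j : Fin m} (hik : i ≠ k) (hk : 0 ≤ u k j) (hlt : u k j < u i j)
    (hpi : p i < b i) : x k j = 0 := by
  by_contra hne
  -- `i` buys `ε` of item `j` from `k` at `k`'s own valuation: `k` is indifferent, `i` gains.
  obtain ⟨ε, hε, hεx, hεp⟩ := exists_pos_mul_le_and_mul_le_s5 (s := 1) (s' := u k j)
    ((hx.1 k j).1.lt_of_ne' hne) (sub_pos.2 hpi)
  rw [mul_one] at hεx
  refine hPO.false_of_improvement (hx.add_transfer hik hε.le hεx)
    (e := Pi.single i (ε * u k j) - Pi.single k (ε * u k j)) (fun a => ?_) (by simp)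
    (fun a => ?_) ⟨i, ?_⟩
  · obtain rfl | hai := eq_or_ne a i
    · simpa [hik] using show p a + ε * u k j ≤ b a by linarith
    obtain rfl | hak := eq_or_ne a k
    · simpa [hai.symm] using show p a - ε * u a j ≤ b a by nlinarith [hb a]
    simpa [hai, hak] using hb a
  · rw [agentValue_add]
    obtain rfl | hai := eq_or_ne a i
    · simpa [agentValue_transfer_target _ _ _ hik, hik] using
        mul_le_mul_of_nonneg_left hlt.le hε.le
    obtain rfl | hak := eq_or_ne a k
    · simp [agentValue_transfer_source _ _ _ hik, hai]
    simp [agentValue_transfer_of_ne _ _ _ hai hak, hai, hak]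
  · simpa [agentValue_add, agentValue_transfer_target _ _ _ hik, hik] using
      mul_lt_mul_of_pos_left hlt hε

lemma eq_zero_or_eq_zero (hPO : PO b u x p) (hx : Feasible n m x) (hb : ∀ a, p a ≤ b a)
    (hu : ∀ a c, 0 ≤ u a c) {i k : Fin n} {j l : Fin m} (hik : i ≠ k) (hjl : j ≠ l)
    (h : u i l * u k j < u i j * u k l) : x k j = 0 ∨ x i l = 0 := by
  by_contra! hne
  -- `k` gives `ε * u k l` of item `j` for `ε * u k j` of item `l`: `k` is indifferent, `i` gains.
  obtain ⟨ε, hε, hγ, hδ⟩ := exists_pos_mul_le_and_mul_le_s5 (s := u k l) (s' := u k j)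
    ((hx.1 k j).1.lt_of_ne' hne.1) ((hx.1 i l).1.lt_of_ne' hne.2)
  have hx' := (hx.add_transfer hik (mul_nonneg hε.le (hu k l)) hγ).add_transfer hik.symm
    (j := l) (mul_nonneg hε.le (hu k j)) (by simpa [transfer, singleColumn, hjl.symm] using hδ)
  have hgain : ε * u k j * u i l < ε * u k l * u i j := by nlinarith
  refine hPO.false_of_improvement hx' (e := 0) (by simpa using hb) (by simp) (fun a => ?_)
    ⟨i, ?_⟩
  · simp only [Pi.zero_apply, add_zero, agentValue_add]
    obtain rfl | hai := eq_or_ne a i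
    · rw [agentValue_transfer_target _ _ _ hik, agentValue_transfer_source _ _ _ hik.symm]
      linarith
    obtain rfl | hak := eq_or_ne a k
    · rw [agentValue_transfer_source _ _ _ hik, agentValue_transfer_target _ _ _ hai]
      linarith [mul_right_comm ε (u a l) (u a j)]
    simp [agentValue_transfer_of_ne _ _ _ hai hak, agentValue_transfer_of_ne _ _ _ hak hai]
  · rw [Pi.zero_apply, add_zero, agentValue_add, agentValue_add,
      agentValue_transfer_target _ _ _ hik, agentValue_transfer_source _ _ _ hik.symm]
    linarith

end PO

structure IsParetoMechanism {n m : ℕ} (b : Fin n → ℝ)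
    (X : (Fin n → Fin m → ℝ) → Fin n → Fin m → ℝ) (P : (Fin n → Fin m → ℝ) → Fin n → ℝ) :
    Prop where
  feasible : ∀ v, (∀ i j, 0 ≤ v i j) → Feasible n m (X v)
  budget : RespectsBudgets b P
  ic : IC X P
  ir : ∀ v, (∀ i j, 0 ≤ v i j) → IR v (X v) (P v)
  po : ∀ v, (∀ i j, 0 ≤ v i j) → PO b v (X v) (P v)

section TwoAgents

variable {m : ℕ} {b : Fin 2 → ℝ} {X : (Fin 2 → Fin m → ℝ) → Fin 2 → Fin m → ℝ}
  {P : (Fin 2 → Fin m → ℝ) → Fin 2 → ℝ} {a w : Fin m → ℝ}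

lemma profile_nonneg (ha : ∀ j, 0 ≤ a j) (hw : ∀ j, 0 ≤ w j) :
    ∀ i j, 0 ≤ (![a, w] : Fin 2 → Fin m → ℝ) i j :=
  Fin.forall_fin_two.2 ⟨ha, hw⟩

namespace IsParetoMechanism

lemma ic_zero (hM : IsParetoMechanism b X P) {a' : Fin m → ℝ} (ha : ∀ j, 0 ≤ a j)
    (ha' : ∀ j, 0 ≤ a' j) (hw : ∀ j, 0 ≤ w j) :
    ∑ j, X ![a', w] 0 j * a j - P ![a', w] 0 ≤ ∑ j, X ![a, w] 0 j * a j - P ![a, w] 0 := by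
  have hupd : Function.update ![a, w] 0 a' = ![a', w] := by ext i; fin_cases i <;> rfl
  simpa [agentValue, hupd] using hM.ic _ (profile_nonneg ha hw) 0 a' ha'

lemma ic_one (hM : IsParetoMechanism b X P) {w' : Fin m → ℝ} (ha : ∀ j, 0 ≤ a j)
    (hw : ∀ j, 0 ≤ w j) (hw' : ∀ j, 0 ≤ w' j) :
    ∑ j, X ![a, w'] 1 j * w j - P ![a, w'] 1 ≤ ∑ j, X ![a, w] 1 j * w j - P ![a, w] 1 := by
  have hupd : Function.update ![a, w] 1 w' = ![a, w'] := by ext i; fin_cases i <;> rfl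
  simpa [agentValue, hupd] using hM.ic _ (profile_nonneg ha hw) 1 w' hw'

lemma payment_one_lt_budget (hM : IsParetoMechanism b X P) (ha : ∀ j, 0 ≤ a j) (hw : ∀ j, 0 ≤ w j)
    (hslack : ∑ j, w j < b 1) : P ![a, w] 1 < b 1 := by
  have hv := profile_nonneg ha hw
  calc P ![a, w] 1 ≤ agentValue ![a, w] (X ![a, w]) 1 := (hM.ir _ hv).payment_le 1
    _ ≤ ∑ j, w j := agentValue_le_sum (hM.feasible _ hv) hw
    _ < b 1 := hslack

lemma allocation_zero_eq_zero_of_lt (hM : IsParetoMechanism b X P) (ha : ∀ j, 0 ≤ a j)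
    (hw : ∀ j, 0 ≤ w j) (hslack : ∑ j, w j < b 1) {j : Fin m} (hj : a j < w j) :
    X ![a, w] 0 j = 0 := by
  have hv := profile_nonneg ha hw
  exact (hM.po _ hv).eq_zero_of_lt (hM.feasible _ hv) (hM.budget _ hv) one_ne_zero (ha j)
    (by simpa using hj) (by simpa using hM.payment_one_lt_budget ha hw hslack)

lemma payment_one_nonpos (hM : IsParetoMechanism b X P) (hw : ∀ j, 0 ≤ w j) (hb : 0 < b 1) :
    P ![0, w] 1 ≤ 0 := by
  have hlim : Tendsto (fun η : ℝ => m * η) (𝓝[>] 0) (𝓝 0) :=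
    ((continuous_const_mul _).tendsto' 0 0 (mul_zero _)).mono_left nhdsWithin_le_nhds
  refine ge_of_tendsto hlim ?_
  filter_upwards [eventually_mem_nhdsWithin, hlim.eventually_lt_const hb] with η hη hηb
  -- Reporting `η` for every item, agent 1 would win everything and pay at most `m * η`.
  set w' : Fin m → ℝ := fun _ => η
  have h0 : ∀ j, 0 ≤ (0 : Fin m → ℝ) j := fun _ => le_rfl
  have hw' : ∀ j, 0 ≤ w' j := fun _ => hη.le
  have hv' := profile_nonneg h0 hw'
  have hsum : ∑ j, w' j = m * η := by simp [w']
  have hx0 : ∀ j, X ![0, w'] 0 j = 0 := fun j =>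
    hM.allocation_zero_eq_zero_of_lt h0 hw' (hsum ▸ hηb) hη
  have hx1 : ∀ j, X ![0, w'] 1 j = 1 := fun j => by
    have := (hM.po _ hv').sum_eq_one (hM.feasible _ hv') (hM.budget _ hv') (i := 1) (j := j) hη
    simpa [Fin.sum_univ_two, hx0] using this
  have hpay : P ![0, w'] 1 ≤ m * η :=
    ((hM.ir _ hv').payment_le 1).trans ((agentValue_le_sum (hM.feasible _ hv') hw').trans hsum.le)
  have hic := hM.ic_one h0 hw hw'
  have hval : ∑ j, X ![0, w] 1 j * w j ≤ ∑ j, w j :=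
    agentValue_le_sum (u := ![0, w]) (a := 1) (hM.feasible _ (profile_nonneg h0 hw)) hw
  simp only [hx1, one_mul] at hic
  linarith

lemma payment_zero_nonneg (hM : IsParetoMechanism b X P) (ha : ∀ j, 0 ≤ a j)
    (hw : ∀ j, 0 ≤ w j) (hb : 0 < b 1) : 0 ≤ P ![a, w] 0 := by
  have h0 : ∀ j, 0 ≤ (0 : Fin m → ℝ) j := fun _ => le_rfl
  have hbalance := (hM.ir _ (profile_nonneg h0 hw)).2
  have hic := hM.ic_zero h0 ha hw
  simp only [Fin.sum_univ_two] at hbalance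
  simp only [Pi.zero_apply, mul_zero, Finset.sum_const_zero, zero_sub] at hic
  linarith [hM.payment_one_nonpos hw hb]

lemma value_le_payment (hM : IsParetoMechanism b X P) (ha : ∀ j, 0 ≤ a j) (hw : ∀ j, 0 ≤ w j)
    (hslack : ∑ j, w j < b 1) : ∑ j, X ![a, w] 0 j * w j ≤ P ![a, w] 0 := by
  set V := ∑ j, X ![a, w] 0 j * w j
  have hb : 0 < b 1 := (Finset.sum_nonneg fun j _ => hw j).trans_lt hslack
  have hlim : Tendsto (fun s : ℝ => s * V) (𝓝[<] 1) (𝓝 V) := by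
    simpa using ((continuous_mul_const V).tendsto 1).mono_left nhdsWithin_le_nhds
  refine le_of_tendsto hlim ?_
  filter_upwards [Ioo_mem_nhdsLT zero_lt_one] with s ⟨hs0, hs1⟩
  -- Agent 1 outbids the type `t = s • w` on every item, so `t` gets nothing and pays `≥ 0`.
  set t : Fin m → ℝ := fun j => s * w j
  have ht : ∀ j, 0 ≤ t j := fun j => mul_nonneg hs0.le (hw j)
  have hworthless : ∀ j, X ![t, w] 0 j * t j = 0 := fun j => by
    rcases (hw j).eq_or_lt with h | h
    · simp [t, ← h]
    · rw [hM.allocation_zero_eq_zero_of_lt ht hw hslack (mul_lt_of_lt_one_left h hs1), zero_mul]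
  have hic := hM.ic_zero ht ha hw
  have hscale : ∑ j, X ![a, w] 0 j * t j = s * V := by
    simp only [t, V, Finset.mul_sum]
    exact Finset.sum_congr rfl fun j _ => by ring
  simp only [hworthless, Finset.sum_const_zero, hscale] at hic
  linarith [hM.payment_zero_nonneg ht hw hb]

end IsParetoMechanism

end TwoAgents

section TwoItems

variable {b : Fin 2 → ℝ} {X : (Fin 2 → Fin 2 → ℝ) → Fin 2 → Fin 2 → ℝ}
  {P : (Fin 2 → Fin 2 → ℝ) → Fin 2 → ℝ} {a w : Fin 2 → ℝ}

structure CaseThree (b a w : Fin 2 → ℝ) : Prop where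
  lt_zero : w 0 < a 0
  lt_budget : a 0 < b 0
  lt_one : w 1 < a 1
  ratio_lt : a 1 * w 0 < a 0 * w 1
  budget_lt : b 0 < w 0 + w 1
  slack : w 0 + w 1 < b 1

lemma IsParetoMechanism.sells_item_zero (hM : IsParetoMechanism b X P) (hw : ∀ j, 0 ≤ w j)
    {e : ℝ} (he : w 0 < e) (heb : e < b 0) :
    X ![![e, 0], w] 0 0 = 1 ∧ P ![![e, 0], w] 0 ≤ e := by
  have he0 : ∀ j, 0 ≤ (![e, 0] : Fin 2 → ℝ) j := Fin.forall_fin_two.2 ⟨(hw 0).trans he.le, le_rfl⟩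
  have hv := profile_nonneg he0 hw
  have hx := hM.feasible _ hv
  have hpay : P ![![e, 0], w] 0 ≤ e := by
    have := (hM.ir _ hv).payment_le 0
    simp only [agentValue, Fin.sum_univ_two, Matrix.cons_val_zero, Matrix.cons_val_one,
      Matrix.cons_val_fin_one, mul_zero, add_zero] at this
    exact this.trans (mul_le_of_le_one_left (he0 0) (hx.1 0 0).2)
  have hx10 : X ![![e, 0], w] 1 0 = 0 :=
    (hM.po _ hv).eq_zero_of_lt hx (hM.budget _ hv) zero_ne_one (hw 0) (by simpa using he)
      (hpay.trans_lt heb)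
  have hsum := (hM.po _ hv).sum_eq_one hx (hM.budget _ hv) (i := 0) (j := 0)
    (by simpa using (hw 0).trans_lt he)
  simp only [Fin.sum_univ_two, hx10, add_zero] at hsum
  exact ⟨hsum, hpay⟩

namespace CaseThree

lemma nonneg (h : CaseThree b a w) (hw : ∀ j, 0 ≤ w j) : ∀ j, 0 ≤ a j :=
  Fin.forall_fin_two.2 ⟨(hw 0).trans h.lt_zero.le, (hw 1).trans h.lt_one.le⟩

lemma outcome (h : CaseThree b a w) (hM : IsParetoMechanism b X P) (hw : ∀ j, 0 ≤ w j) :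
    X ![a, w] 0 0 = 1 ∧ X ![a, w] 0 1 < 1 ∧ P ![a, w] 0 = b 0 := by
  have ha := h.nonneg hw
  have hv := profile_nonneg ha hw
  have hx := hM.feasible _ hv
  have hbud := hM.budget _ hv
  have hpo := hM.po _ hv
  have hpay := (hM.ir _ hv).payment_le 0
  simp only [agentValue, Fin.sum_univ_two, Matrix.cons_val_zero] at hpay
  have hx10 : X ![a, w] 1 0 = 0 := by
    by_contra hne
    have hx01 : X ![a, w] 0 1 = 0 := (hpo.eq_zero_or_eq_zero hx hbud hv zero_ne_one
      zero_ne_one (by simpa using h.ratio_lt)).resolve_left hne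
    refine hne (hpo.eq_zero_of_lt hx hbud zero_ne_one (hw 0) (by simpa using h.lt_zero) ?_)
    rw [hx01] at hpay
    nlinarith [(hx.1 0 0).2, ha 0, h.lt_budget]
  have hx00 : X ![a, w] 0 0 = 1 := by
    have := hpo.sum_eq_one hx hbud (i := 0) (j := 0) (by simpa using (hw 0).trans_lt h.lt_zero)
    simpa [Fin.sum_univ_two, hx10] using this
  have hvalue := hM.value_le_payment ha hw (by simpa [Fin.sum_univ_two] using h.slack)
  simp only [Fin.sum_univ_two, hx00, one_mul] at hvalue
  have hpb : P ![a, w] 0 ≤ b 0 := hbud 0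
  have hx01 : X ![a, w] 0 1 < 1 := by
    refine (hx.1 0 1).2.lt_of_ne fun hx01 => ?_
    rw [hx01] at hvalue
    linarith [h.budget_lt]
  refine ⟨hx00, hx01, hpb.eq_of_not_lt fun hlt => hx01.ne ?_⟩
  have hx11 : X ![a, w] 1 1 = 0 :=
    hpo.eq_zero_of_lt hx hbud zero_ne_one (hw 1) (by simpa using h.lt_one) hlt
  have := hpo.sum_eq_one hx hbud (i := 0) (j := 1) (by simpa using (hw 1).trans_lt h.lt_one)
  simpa [Fin.sum_univ_two, hx11] using this

lemma budget_sub_le_report_mul (h : CaseThree b a w) (hM : IsParetoMechanism b X P)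
    (hw : ∀ j, 0 ≤ w j) : b 0 - w 0 ≤ a 1 * X ![a, w] 0 1 := by
  obtain ⟨hx00, -, hpay⟩ := h.outcome hM hw
  have ha := h.nonneg hw
  suffices b 0 - a 1 * X ![a, w] 0 1 ≤ w 0 by linarith
  refine ge_of_tendsto (tendsto_id.mono_left (nhdsWithin_le_nhds (s := Set.Ioi (w 0)))) ?_
  filter_upwards [Ioo_mem_nhdsGT (h.lt_zero.trans h.lt_budget)] with e ⟨he, heb⟩
  obtain ⟨hy00, hypay⟩ := hM.sells_item_zero hw he heb
  have he0 : ∀ j, 0 ≤ (![e, 0] : Fin 2 → ℝ) j := Fin.forall_fin_two.2 ⟨(hw 0).trans he.le, le_rfl⟩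
  have hic := hM.ic_zero ha he0 hw
  have hy01 := ((hM.feasible _ (profile_nonneg he0 hw)).1 0 1).1
  simp only [Fin.sum_univ_two, hx00, hy00, hpay] at hic
  show _ ≤ e
  nlinarith [mul_nonneg hy01 (ha 1)]

lemma budget_sub_le_mul (h : CaseThree b a w) (hM : IsParetoMechanism b X P)
    (hw : ∀ j, 0 ≤ w j) : b 0 - w 0 ≤ w 1 * X ![a, w] 0 1 := by
  obtain ⟨hx00, -, hpay⟩ := h.outcome hM hw
  have ha := h.nonneg hw
  set c := X ![a, w] 0 1
  have hcont : ∀ y : ℝ, Tendsto (fun δ => (w 1 + δ) * y) (𝓝[>] 0) (𝓝 (w 1 * y)) := fun y =>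
    ((Continuous.tendsto' (by fun_prop) 0 _ (by simp)).mono_left nhdsWithin_le_nhds)
  have hratio : ∀ᶠ δ in 𝓝[>] (0 : ℝ), (w 1 + δ) * w 0 < a 0 * w 1 :=
    (hcont (w 0)).eventually_lt_const (by nlinarith [h.ratio_lt, h.lt_one, hw 0])
  refine ge_of_tendsto (hcont c) ?_
  -- Raising agent 0's report for item 1 to `w 1 + δ` stays in Case 3 and, by IC, cannot
  -- increase its share of item 1.
  filter_upwards [eventually_mem_nhdsWithin, hratio] with δ (hδ : 0 < δ) hr
  have hr3 : CaseThree b ![a 0, w 1 + δ] w :=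
    ⟨h.lt_zero, h.lt_budget, by simpa using hδ, by simpa using hr, h.budget_lt, h.slack⟩
  obtain ⟨hr00, -, hrpay⟩ := hr3.outcome hM hw
  have hic := hM.ic_zero ha (hr3.nonneg hw) hw
  simp only [Fin.sum_univ_two, hx00, hr00, hpay, hrpay] at hic
  have hc : X ![![a 0, w 1 + δ], w] 0 1 ≤ c :=
    le_of_mul_le_mul_right (by linarith) ((hw 1).trans_lt h.lt_one)
  calc b 0 - w 0 ≤ (w 1 + δ) * X ![![a 0, w 1 + δ], w] 0 1 := by
        simpa using hr3.budget_sub_le_report_mul hM hw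
    _ ≤ (w 1 + δ) * c := mul_le_mul_of_nonneg_left hc (by linarith [hw 1])

end CaseThree

end TwoItems

theorem stmt5_general (b : Fin 2 → ℝ)
    (X : (Fin 2 → Fin 2 → ℝ) → Fin 2 → Fin 2 → ℝ)
    (P : (Fin 2 → Fin 2 → ℝ) → Fin 2 → ℝ)
    (hX : ∀ v : Fin 2 → Fin 2 → ℝ, (∀ i j, 0 ≤ v i j) → Feasible 2 2 (X v))
    (hP : RespectsBudgets b P)
    (hIC : IC X P)
    (hIRPO : ∀ v : Fin 2 → Fin 2 → ℝ, (∀ i j, 0 ≤ v i j) →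
      IR v (X v) (P v) ∧ PO b v (X v) (P v))
    (v : Fin 2 → Fin 2 → ℝ) (hv : ∀ i j, 0 ≤ v i j)
    (h1 : v 1 0 + v 1 1 < b 1) (h2 : v 1 0 < v 0 0) (h3 : v 1 1 < v 0 1)
    (h4 : v 0 0 < b 0) (h5 : v 0 1 * v 1 0 < v 0 0 * v 1 1)
    (h6 : b 0 < v 1 0 + v 1 1) :
    P v 0 = b 0 ∧ X v 0 1 = (b 0 - v 1 0) / v 1 1 ∧ X v 0 1 < 1 := by
  have hM : IsParetoMechanism b X P :=
    ⟨hX, hP, hIC, fun v hv => (hIRPO v hv).1, fun v hv => (hIRPO v hv).2⟩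
  have hcase : CaseThree b (v 0) (v 1) := ⟨h2, h4, h3, h5, h6, h1⟩
  have hprofile : ![v 0, v 1] = v := by ext i; fin_cases i <;> rfl
  obtain ⟨hx00, hx01, hpay⟩ := hprofile ▸ hcase.outcome hM (hv 1)
  have hupper := hprofile ▸ hM.value_le_payment (hcase.nonneg (hv 1)) (hv 1)
    (by simpa [Fin.sum_univ_two] using h1)
  have hlower := hprofile ▸ hcase.budget_sub_le_mul hM (hv 1)
  simp only [Fin.sum_univ_two, hx00, hpay, one_mul] at hupper
  have hD : 0 < v 1 1 := pos_of_mul_pos_right ((mul_nonneg (hv 0 1) (hv 1 0)).trans_lt h5) (hv 0 0)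
  refine ⟨hpay, ?_, hx01⟩
  rw [eq_div_iff hD.ne']
  linarith

/-- Lemma on Case 3, continued: with 2 agents and 2 divisible items
(index 0 = paper's agent/item 1, index 1 = paper's agent/item 2), for every profile with
`b 2 > v 2 1 + v 2 2`, `v 1 1 > v 2 1`, `v 1 2 > v 2 2`, `b 1 > v 1 1`,
`v 1 1 * v 2 2 > v 1 2 * v 2 1`, and `v 2 1 + v 2 2 > b 1`, every IR, PO, IC mechanism
produces `p 1 = b 1` and `x 1 2 = (b 1 − v 2 1) / v 2 2 < 1`. -/
theorem stmt5 (b : Fin 2 → ℝ) (hb : ∀ i, 0 ≤ b i)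
    (X : (Fin 2 → Fin 2 → ℝ) → Fin 2 → Fin 2 → ℝ)
    (P : (Fin 2 → Fin 2 → ℝ) → Fin 2 → ℝ)
    (hX : ∀ v : Fin 2 → Fin 2 → ℝ, (∀ i j, 0 ≤ v i j) → Feasible 2 2 (X v))
    (hP : RespectsBudgets b P)
    (hIC : IC X P)
    (hIRPO : ∀ v : Fin 2 → Fin 2 → ℝ, (∀ i j, 0 ≤ v i j) →
      IR v (X v) (P v) ∧ PO b v (X v) (P v))
    (v : Fin 2 → Fin 2 → ℝ) (hv : ∀ i j, 0 ≤ v i j)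
    (h1 : v 1 0 + v 1 1 < b 1) (h2 : v 1 0 < v 0 0) (h3 : v 1 1 < v 0 1)
    (h4 : v 0 0 < b 0) (h5 : v 0 1 * v 1 0 < v 0 0 * v 1 1)
    (h6 : b 0 < v 1 0 + v 1 1) :
    P v 0 = b 0 ∧ X v 0 1 = (b 0 - v 1 0) / v 1 1 ∧ X v 0 1 < 1 :=
  stmt5_general b X P hX hP hIC hIRPO v hv h1 h2 h3 h4 h5 h6
end

section
/- For every feasible fractional allocation x : Fin n → Fin m → ℝ (with 0 ≤ x i j ≤ 1 and ∑ i, x i j ≤ 1 for every item j) there exists a finitely supported probability measure μ on {0,1}-valued feasible allocations x̄ : Fin n → Fin m → ℝ such that the expectation of x̄ i j under μ equals x i j for all agents i and items j. Consequently, for any valuations v and any payments p, the expected utility ∫ ((∑ j, x̄ i j * v i j) − p i) dμ of each agent i equals the deterministic utility (∑ j, x i j * v i j) − p i, and the revenue ∑ i, p i is unchanged. -/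
open Finset

/-- A feasible `{0,1}`-valued (indivisible) allocation. -/
def FeasibleInd (n m : ℕ) (x : Fin n → Fin m → ℝ) : Prop :=
  (∀ i j, x i j = 0 ∨ x i j = 1) ∧ ∀ j, ∑ i, x i j ≤ 1

/-- every feasible fractional allocation is the expectation of a finitely
supported probability measure (a finite set `s` with weights `w`) over `{0,1}`-valued
feasible allocations; consequently each agent's expected utility equals his deterministic
utility and the revenue is unchanged. -/
theorem stmt8 (n m : ℕ) (x : Fin n → Fin m → ℝ) (hx : Feasible n m x) :
    ∃ (s : Finset (Fin n → Fin m → ℝ)) (w : (Fin n → Fin m → ℝ) → ℝ),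
      (∀ y ∈ s, 0 ≤ w y) ∧
      (∑ y ∈ s, w y = 1) ∧
      (∀ y ∈ s, FeasibleInd n m y) ∧
      (∀ i j, ∑ y ∈ s, w y * y i j = x i j) ∧
      (∀ (v : Fin n → Fin m → ℝ) (p : Fin n → ℝ) (i : Fin n),
        ∑ y ∈ s, w y * ((∑ j, y i j * v i j) - p i) = (∑ j, x i j * v i j) - p i) ∧
      (∀ p : Fin n → ℝ, ∑ y ∈ s, w y * (∑ i, p i) = ∑ i, p i) := by
  classical
  set q : Fin m → Option (Fin n) → ℝ :=
    fun j o => Option.elim o (1 - ∑ i, x i j) (fun i => x i j) with hq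
  set g : (Fin m → Option (Fin n)) → (Fin n → Fin m → ℝ) :=
    fun f i j => if f j = some i then 1 else 0 with hg
  set W : (Fin m → Option (Fin n)) → ℝ := fun f => ∏ j, q j (f j) with hW
  have hqnn : ∀ j o, 0 ≤ q j o := by
    intro j o
    cases o with
    | none => simpa [hq] using sub_nonneg.mpr (hx.2 j)
    | some i => simpa [hq] using (hx.1 i j).1
  have hWnn : ∀ f, 0 ≤ W f := fun f => Finset.prod_nonneg fun j _ => hqnn j (f j)
  have hqsum : ∀ j, ∑ o : Option (Fin n), q j o = 1 := by
    intro j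
    rw [Fintype.sum_option]
    simp [hq]
  set s : Finset (Fin n → Fin m → ℝ) := Finset.image g Finset.univ with hs
  set w : (Fin n → Fin m → ℝ) → ℝ :=
    fun y => ∑ f ∈ Finset.univ.filter (fun f => g f = y), W f with hw
  have key : ∀ F : (Fin n → Fin m → ℝ) → ℝ,
      ∑ y ∈ s, w y * F y = ∑ f : Fin m → Option (Fin n), W f * F (g f) := by
    intro F
    rw [← Finset.sum_fiberwise_of_maps_to
      (fun f _ => Finset.mem_image_of_mem g (Finset.mem_univ f))
      (fun f => W f * F (g f))]
    refine Finset.sum_congr rfl fun y hy => ?_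
    rw [hw, Finset.sum_mul]
    exact Finset.sum_congr rfl fun f hf => by rw [(Finset.mem_filter.mp hf).2]
  have hWtot : ∑ f : Fin m → Option (Fin n), W f = 1 := by
    have h1 := (Fintype.prod_sum (fun (j : Fin m) (o : Option (Fin n)) => q j o)).symm
    rw [hW, h1]
    simp [hqsum]
  have hwsum : ∑ y ∈ s, w y = 1 := by
    have := key (fun _ => 1)
    simpa [hWtot] using this
  have hexp : ∀ i j, ∑ y ∈ s, w y * y i j = x i j := by
    intro i j
    rw [key (fun y => y i j)]
    set r : Fin m → Option (Fin n) → ℝ :=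
      Function.update q j (fun o => if o = some i then x i j else 0) with hr
    have hterm : ∀ f : Fin m → Option (Fin n), W f * g f i j = ∏ j', r j' (f j') := by
      intro f
      simp only [hW, hg]
      rw [← Finset.mul_prod_erase Finset.univ (fun j' => q j' (f j')) (Finset.mem_univ j),
        ← Finset.mul_prod_erase Finset.univ (fun j' => r j' (f j')) (Finset.mem_univ j)]
      have he : ∏ j' ∈ Finset.univ.erase j, r j' (f j')
          = ∏ j' ∈ Finset.univ.erase j, q j' (f j') := by
        refine Finset.prod_congr rfl fun j' hj' => ?_
        rw [hr, Function.update_of_ne (Finset.ne_of_mem_erase hj')]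
      rw [he, hr, Function.update_self]
      by_cases h : f j = some i
      · simp [h, hq]
      · simp [h]
    rw [Finset.sum_congr rfl (fun f _ => hterm f),
      ← Fintype.prod_sum (fun (j' : Fin m) (o : Option (Fin n)) => r j' o)]
    have hc : ∀ j', (∑ o : Option (Fin n), r j' o) = if j' = j then x i j else 1 := by
      intro j'
      by_cases h : j' = j
      · subst h
        rw [hr]
        simp [Function.update_self, Finset.sum_ite_eq']
      · rw [hr, Function.update_of_ne h, hqsum, if_neg h]
    rw [Finset.prod_congr rfl (fun j' _ => hc j')]
    simp
  refine ⟨s, w, ?_, hwsum, ?_, hexp, ?_, ?_⟩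
  · intro y hy
    exact Finset.sum_nonneg fun f _ => hWnn f
  · intro y hy
    obtain ⟨f, -, rfl⟩ := Finset.mem_image.mp hy
    constructor
    · intro i j
      rw [hg]
      by_cases h : f j = some i <;> simp [h]
    · intro j
      rw [hg]
      cases h : f j with
      | none => simp [h]
      | some i0 => simp [h]
  · intro v p i
    have h1 : ∀ y, w y * ((∑ j, y i j * v i j) - p i)
        = (∑ j, w y * y i j * v i j) - w y * p i := by
      intro y
      rw [mul_sub, Finset.mul_sum]
      congr 1
      exact Finset.sum_congr rfl fun j _ => by ring
    rw [Finset.sum_congr rfl (fun y _ => h1 y), Finset.sum_sub_distrib, Finset.sum_comm,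
      ← Finset.sum_mul, hwsum, one_mul]
    congr 1
    refine Finset.sum_congr rfl fun j _ => ?_
    rw [← Finset.sum_mul, hexp]
  · intro p
    rw [← Finset.sum_mul, hwsum, one_mul]
end

section
/- For 2 agents, 2 items, multi-dimensional additive valuations, and any public budgets b with 0 < b 1 < b 2, there is no randomized mechanism that is individually rational ex interim, Pareto optimal ex interim, and incentive compatible ex interim while satisfying the budget constraint ex post. Precisely: there is no assignment v ↦ μ_v of a probability measure on pairs (x̄, p̄) of allocations and payments to every valuation profile v (all v i j ≥ 0), with μ_v-almost surely the allocation feasible (0 ≤ x̄ i j ≤ 1, ∑ i, x̄ i j ≤ 1) and p̄ i ≤ b i for all i, all coordinates integrable, such that for every profile v: (i) IR ex interim: ∫ ((∑ j, x̄ i j * v i j) − p̄ i) dμ_v ≥ 0 for every agent i and ∫ (∑ i, p̄ i) dμ_v ≥ 0; (ii) PO ex interim: the expected outcome (∫ x̄ dμ_v, ∫ p̄ dμ_v) is Pareto optimal; and (iii) IC ex interim: for every agent i and every alternative report v'_i, ∫ ((∑ j, x̄ i j * v i j) − p̄ i) dμ_v ≥ ∫ ((∑ j, x̄ i j * v i j)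 − p̄ i) dμ_{(v'_i, v_{-i})}, where utilities are computed with agent i's true valuations v i. -/
open Finset MeasureTheory

namespace Stmt9Aux

lemma fin2cases (i : Fin 2) : i = 0 ∨ i = 1 := by omega

/-- A deterministic mechanism (will be extracted from a randomized one). -/
structure DetM (b : Fin 2 → ℝ) where
  X : (Fin 2 → Fin 2 → ℝ) → Fin 2 → Fin 2 → ℝ
  Q : (Fin 2 → Fin 2 → ℝ) → Fin 2 → ℝ
  feas : ∀ v, (∀ i j, 0 ≤ v i j) → Feasible 2 2 (X v)
  budget : ∀ v, (∀ i j, 0 ≤ v i j) → ∀ i, Q v i ≤ b i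
  ir : ∀ v, (∀ i j, 0 ≤ v i j) → ∀ i, 0 ≤ agentValue v (X v) i - Q v i
  rev : ∀ v, (∀ i j, 0 ≤ v i j) → 0 ≤ Q v 0 + Q v 1
  po : ∀ v, (∀ i j, 0 ≤ v i j) → PO b v (X v) (Q v)
  ic : ∀ v, (∀ i j, 0 ≤ v i j) → ∀ i w, (∀ j, 0 ≤ w j) →
      agentValue v (X (Function.update v i w)) i - Q (Function.update v i w) i ≤
        agentValue v (X v) i - Q v i

lemma upd0 (a c w : Fin 2 → ℝ) :
    Function.update (![a, c] : Fin 2 → Fin 2 → ℝ) (0 : Fin 2) w = ![w, c] := by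
  funext i
  fin_cases i
  · simp
  · rw [Function.update_of_ne (by decide)]
    simp

lemma upd1 (a c w : Fin 2 → ℝ) :
    Function.update (![a, c] : Fin 2 → Fin 2 → ℝ) (1 : Fin 2) w = ![a, w] := by
  funext i
  fin_cases i
  · rw [Function.update_of_ne (by decide)]
    simp
  · simp

lemma prof_nonneg {a c : Fin 2 → ℝ} (ha : ∀ j, 0 ≤ a j) (hc : ∀ j, 0 ≤ c j) :
    ∀ i j, 0 ≤ (![a, c] : Fin 2 → Fin 2 → ℝ) i j := by
  intro i j
  fin_cases i
  · simpa using ha j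
  · simpa using hc j

lemma av0 (a c : Fin 2 → ℝ) (x : Fin 2 → Fin 2 → ℝ) :
    agentValue ![a, c] x 0 = x 0 0 * a 0 + x 0 1 * a 1 := by
  simp [agentValue, Fin.sum_univ_two]

lemma av1 (a c : Fin 2 → ℝ) (x : Fin 2 → Fin 2 → ℝ) :
    agentValue ![a, c] x 1 = x 1 0 * c 0 + x 1 1 * c 1 := by
  simp [agentValue, Fin.sum_univ_two]

section ImprovementLemmas

variable {b : Fin 2 → ℝ} {v : Fin 2 → Fin 2 → ℝ} {x : Fin 2 → Fin 2 → ℝ} {q : Fin 2 → ℝ}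

/-- "free gift" improvement: an undersold item with a positive value kills PO. -/
lemma L1' (hPO : PO b v x q) (hF : Feasible 2 2 x) (hb : ∀ i, q i ≤ b i)
    (hv : ∀ i j, 0 ≤ v i j)
    (j i₀ : Fin 2) (hpos : 0 < v i₀ j) (hlt : x 0 j + x 1 j < 1) : False := by
  set δ : ℝ := 1 - (x 0 j + x 1 j) with hδdef
  have hδ : 0 < δ := by simp only [hδdef]; linarith
  apply hPO
  refine ⟨fun a j' => x a j' + if a = i₀ ∧ j' = j then δ else 0, q, ?_, hb, ?_, le_refl _, ?_⟩
  · constructor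
    · intro i j'
      constructor
      · have : (0:ℝ) ≤ if i = i₀ ∧ j' = j then δ else 0 := by positivity
        have h := (hF.1 i j').1
        simp only []
        linarith
      · by_cases h : i = i₀ ∧ j' = j
        · obtain ⟨rfl, rfl⟩ := h
          simp only [if_pos, and_self, if_true]
          have h0 : 0 ≤ x 0 j' := (hF.1 0 j').1
          have h1 : 0 ≤ x 1 j' := (hF.1 1 j').1
          rcases fin2cases i with rfl | rfl <;> simp only [hδdef] <;> linarith
        · simp only [if_neg h, add_zero]
          exact (hF.1 i j').2
    · intro j'
      rw [Fin.sum_univ_two]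
      have key : ((if (0:Fin 2) = i₀ ∧ j' = j then δ else 0) + (if (1:Fin 2) = i₀ ∧ j' = j then δ else 0))
          = if j' = j then δ else 0 := by
        rcases fin2cases i₀ with rfl | rfl <;> by_cases hj : j' = j <;> simp [hj]
      have hcol : ∀ j'' : Fin 2, x 0 j'' + x 1 j'' ≤ 1 := by
        intro j''; have := hF.2 j''; rwa [Fin.sum_univ_two] at this
      by_cases hj : j' = j
      · subst hj
        rcases fin2cases i₀ with rfl | rfl <;> norm_num <;> simp only [hδdef] <;> linarith
      · have h0 : ¬((0:Fin 2) = i₀ ∧ j' = j) := fun h => hj h.2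
        have h1 : ¬((1:Fin 2) = i₀ ∧ j' = j) := fun h => hj h.2
        simp only [h0, h1, if_false, add_zero]
        exact hcol j'
  · intro i
    simp only [agentValue, Fin.sum_univ_two, add_mul]
    have t0 : (0:ℝ) ≤ (if i = i₀ ∧ (0:Fin 2) = j then δ else 0) * v i 0 := by
      have := hv i 0; positivity
    have t1 : (0:ℝ) ≤ (if i = i₀ ∧ (1:Fin 2) = j then δ else 0) * v i 1 := by
      have := hv i 1; positivity
    linarith
  · left
    refine ⟨i₀, ?_⟩
    simp only [agentValue, Fin.sum_univ_two, add_mul, sub_lt_sub_iff_right]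
    rcases fin2cases j with rfl | rfl <;> norm_num <;> nlinarith [mul_pos hδ hpos]

/-- trade improvement, buyer = agent 1. -/
lemma L2buy1 (hPO : PO b v x q) (hF : Feasible 2 2 x) (hb : ∀ i, q i ≤ b i)
    (hv : ∀ i j, 0 ≤ v i j) (j : Fin 2)
    (hval : v 0 j < v 1 j) (hx : 0 < x 0 j) (hq : q 1 < b 1) : False := by
  have hcol : ∀ j'' : Fin 2, x 0 j'' + x 1 j'' ≤ 1 := by
    intro j''; have := hF.2 j''; rwa [Fin.sum_univ_two] at this
  set t : ℝ := (v 1 j + v 0 j)/2 with htdef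
  have ht : 0 < t := by have := hv 0 j; simp only [htdef]; linarith
  have ht1 : v 0 j < t := by simp only [htdef]; linarith
  have ht2 : t < v 1 j := by simp only [htdef]; linarith
  set δ : ℝ := min (x 0 j) ((b 1 - q 1)/t) with hδdef
  have hδ : 0 < δ := lt_min hx (div_pos (by linarith) ht)
  have hδ1 : δ ≤ x 0 j := min_le_left _ _
  have hδ2 : δ * t ≤ b 1 - q 1 := by
    have h := min_le_right (x 0 j) ((b 1 - q 1)/t)
    calc δ * t ≤ (b 1 - q 1)/t * t := by
          exact mul_le_mul_of_nonneg_right h ht.le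
      _ = b 1 - q 1 := by field_simp
  apply hPO
  refine ⟨fun a j' => x a j' + if j' = j then (if a = 1 then δ else -δ) else 0,
      fun a => q a + if a = 1 then δ*t else -(δ*t), ?_, ?_, ?_, ?_, ?_⟩
  · constructor
    · intro i j'
      by_cases hj : j' = j
      · subst hj
        rcases fin2cases i with rfl | rfl
        · norm_num
          constructor
          · linarith
          · have := (hF.1 0 j').2; linarith
        · norm_num
          constructor
          · have := (hF.1 1 j').1; linarith
          · have := (hF.1 0 j').1; have := hcol j'; linarith
      · simp only [if_neg hj, add_zero]
        exact hF.1 i j'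
    · intro j'
      rw [Fin.sum_univ_two]
      by_cases hj : j' = j
      · subst hj
        norm_num
        have := hcol j'; linarith
      · simp only [if_neg hj, add_zero]
        exact hcol j'
  · intro i
    rcases fin2cases i with rfl | rfl
    · norm_num
      have : 0 ≤ δ * t := by positivity
      have := hb 0; linarith
    · norm_num; linarith
  · intro i
    simp only [agentValue, Fin.sum_univ_two, add_mul]
    rcases fin2cases i with rfl | rfl
    · rcases fin2cases j with rfl | rfl <;> norm_num <;> nlinarith [hδ.le, ht1.le]
    · rcases fin2cases j with rfl | rfl <;> norm_num <;> nlinarith [hδ.le, ht2.le]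
  · rw [Fin.sum_univ_two, Fin.sum_univ_two]
    norm_num
    linarith
  · left
    refine ⟨1, ?_⟩
    simp only [agentValue, Fin.sum_univ_two, add_mul, sub_lt_sub_iff_right]
    rcases fin2cases j with rfl | rfl <;> norm_num <;> nlinarith [mul_lt_mul_of_pos_left ht2 hδ]

/-- trade improvement, buyer = agent 0. -/
lemma L2buy0 (hPO : PO b v x q) (hF : Feasible 2 2 x) (hb : ∀ i, q i ≤ b i)
    (hv : ∀ i j, 0 ≤ v i j) (j : Fin 2)
    (hval : v 1 j < v 0 j) (hx : 0 < x 1 j) (hq : q 0 < b 0) : False := by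
  have hcol : ∀ j'' : Fin 2, x 0 j'' + x 1 j'' ≤ 1 := by
    intro j''; have := hF.2 j''; rwa [Fin.sum_univ_two] at this
  set t : ℝ := (v 0 j + v 1 j)/2 with htdef
  have ht : 0 < t := by have := hv 1 j; simp only [htdef]; linarith
  have ht1 : v 1 j < t := by simp only [htdef]; linarith
  have ht2 : t < v 0 j := by simp only [htdef]; linarith
  set δ : ℝ := min (x 1 j) ((b 0 - q 0)/t) with hδdef
  have hδ : 0 < δ := lt_min hx (div_pos (by linarith) ht)
  have hδ1 : δ ≤ x 1 j := min_le_left _ _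
  have hδ2 : δ * t ≤ b 0 - q 0 := by
    have h := min_le_right (x 1 j) ((b 0 - q 0)/t)
    calc δ * t ≤ (b 0 - q 0)/t * t := by
          exact mul_le_mul_of_nonneg_right h ht.le
      _ = b 0 - q 0 := by field_simp
  apply hPO
  refine ⟨fun a j' => x a j' + if j' = j then (if a = 0 then δ else -δ) else 0,
      fun a => q a + if a = 0 then δ*t else -(δ*t), ?_, ?_, ?_, ?_, ?_⟩
  · constructor
    · intro i j'
      by_cases hj : j' = j
      · subst hj
        rcases fin2cases i with rfl | rfl
        · norm_num
          constructor
          · have := (hF.1 0 j').1; linarith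
          · have := (hF.1 1 j').1; have := hcol j'; linarith
        · norm_num
          constructor
          · linarith
          · have := (hF.1 1 j').2; linarith
      · simp only [if_neg hj, add_zero]
        exact hF.1 i j'
    · intro j'
      rw [Fin.sum_univ_two]
      by_cases hj : j' = j
      · subst hj
        norm_num
        have := hcol j'; linarith
      · simp only [if_neg hj, add_zero]
        exact hcol j'
  · intro i
    rcases fin2cases i with rfl | rfl
    · norm_num; linarith
    · norm_num
      have : 0 ≤ δ * t := by positivity
      have := hb 1; linarith
  · intro i
    simp only [agentValue, Fin.sum_univ_two, add_mul]
    rcases fin2cases i with rfl | rfl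
    · rcases fin2cases j with rfl | rfl <;> norm_num <;> nlinarith [hδ.le, ht2.le]
    · rcases fin2cases j with rfl | rfl <;> norm_num <;> nlinarith [hδ.le, ht1.le]
  · rw [Fin.sum_univ_two, Fin.sum_univ_two]
    norm_num
    linarith
  · left
    refine ⟨0, ?_⟩
    simp only [agentValue, Fin.sum_univ_two, add_mul, sub_lt_sub_iff_right]
    rcases fin2cases j with rfl | rfl <;> norm_num <;> nlinarith [mul_lt_mul_of_pos_left ht2 hδ]

/-- exchange improvement: agent 0 trades some of item 0 for some of agent 1's item 1. -/
lemma L3' (hPO : PO b v x q) (hF : Feasible 2 2 x) (hb : ∀ i, q i ≤ b i)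
    (hv : ∀ i j, 0 ≤ v i j) (hv00 : 0 < v 0 0) (hv10 : 0 < v 1 0)
    (hr : v 0 0 * v 1 1 < v 0 1 * v 1 0) (h00 : 0 < x 0 0) (h11 : 0 < x 1 1) : False := by
  have hcol : ∀ j'' : Fin 2, x 0 j'' + x 1 j'' ≤ 1 := by
    intro j''; have := hF.2 j''; rwa [Fin.sum_univ_two] at this
  set r : ℝ := (v 1 1 / v 1 0 + v 0 1 / v 0 0)/2 with hrdef
  have hra : v 1 1 / v 1 0 < r := by
    have h : v 1 1 / v 1 0 < v 0 1 / v 0 0 := (div_lt_div_iff₀ hv10 hv00).mpr (by linarith)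
    simp only [hrdef]; linarith
  have hrb : r < v 0 1 / v 0 0 := by
    have h : v 1 1 / v 1 0 < v 0 1 / v 0 0 := (div_lt_div_iff₀ hv10 hv00).mpr (by linarith)
    simp only [hrdef]; linarith
  have hrpos : 0 < r := lt_of_le_of_lt (div_nonneg (hv 1 1) hv10.le) hra
  set ε : ℝ := min (x 1 1) (x 0 0 / r) with hεdef
  have hε : 0 < ε := lt_min h11 (div_pos h00 hrpos)
  have hε1 : ε ≤ x 1 1 := min_le_left _ _
  set δ : ℝ := r * ε with hδdef
  have hδ : 0 < δ := mul_pos hrpos hε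
  have hδ1 : δ ≤ x 0 0 := by
    have h := min_le_right (x 1 1) (x 0 0 / r)
    calc δ = r * ε := rfl
      _ ≤ r * (x 0 0 / r) := mul_le_mul_of_nonneg_left h hrpos.le
      _ = x 0 0 := by field_simp
  have hu0 : δ * v 0 0 < ε * v 0 1 := by
    have : r * v 0 0 < v 0 1 := (lt_div_iff₀ hv00).mp hrb
    calc δ * v 0 0 = ε * (r * v 0 0) := by ring
      _ < ε * v 0 1 := by exact mul_lt_mul_of_pos_left this hε
  have hu1 : ε * v 1 1 < δ * v 1 0 := by
    have : v 1 1 < r * v 1 0 := (div_lt_iff₀ hv10).mp hra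
    calc ε * v 1 1 < ε * (r * v 1 0) := mul_lt_mul_of_pos_left this hε
      _ = δ * v 1 0 := by ring
  apply hPO
  refine ⟨fun a j' => x a j' + if a = 0 then (if j' = 0 then -δ else ε)
      else (if j' = 0 then δ else -ε), q, ?_, hb, ?_, le_refl _, ?_⟩
  · constructor
    · intro i j'
      rcases fin2cases i with rfl | rfl <;> rcases fin2cases j' with rfl | rfl <;> norm_num
      · constructor
        · linarith
        · have := (hF.1 0 0).2; linarith
      · constructor
        · have := (hF.1 0 1).1; linarith
        · have := hcol 1; have := (hF.1 1 1).1; linarith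
      · constructor
        · have := (hF.1 1 0).1; linarith
        · have := hcol 0; have := (hF.1 0 0).1; linarith
      · constructor
        · linarith
        · have := (hF.1 1 1).2; linarith
    · intro j'
      rw [Fin.sum_univ_two]
      rcases fin2cases j' with rfl | rfl <;> norm_num <;>
        [(have := hcol 0; linarith); (have := hcol 1; linarith)]
  · intro i
    simp only [agentValue, Fin.sum_univ_two, add_mul, sub_le_sub_iff_right]
    rcases fin2cases i with rfl | rfl <;> norm_num <;> nlinarith
  · left
    refine ⟨0, ?_⟩
    simp only [agentValue, Fin.sum_univ_two, add_mul, sub_lt_sub_iff_right]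
    norm_num
    nlinarith

end ImprovementLemmas


section MechLemmas

variable {b : Fin 2 → ℝ}

lemma fullalloc (M : DetM b) (v : Fin 2 → Fin 2 → ℝ) (hv : ∀ i j, 0 ≤ v i j)
    (j i₀ : Fin 2) (hpos : 0 < v i₀ j) :
    M.X v 0 j + M.X v 1 j = 1 := by
  have hF := M.feas v hv
  have hle : M.X v 0 j + M.X v 1 j ≤ 1 := by
    have := hF.2 j; rwa [Fin.sum_univ_two] at this
  rcases eq_or_lt_of_le hle with h | h
  · exact h
  · exact (L1' (M.po v hv) hF (M.budget v hv) hv j i₀ hpos h).elim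

/-- bundle securing for the rich agent: it can always guarantee the whole bundle
at a price at most the opponent's reported total value (if that is below its budget). -/
lemma secure2 (M : DetM b) (θ z' : Fin 2 → ℝ) (hθ : ∀ j, 0 ≤ θ j) (hz' : ∀ j, 0 ≤ z' j)
    (hB : θ 0 + θ 1 < b 1) :
    z' 0 + z' 1 - (θ 0 + θ 1) ≤ agentValue ![θ, z'] (M.X ![θ, z']) 1 - M.Q ![θ, z'] 1 := by
  by_contra hlt
  push_neg at hlt
  set G : ℝ := z' 0 + z' 1 - (θ 0 + θ 1) -
      (agentValue ![θ, z'] (M.X ![θ, z']) 1 - M.Q ![θ, z'] 1) with hG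
  have hGpos : 0 < G := by simp only [hG]; linarith
  set ε : ℝ := min (G/3) ((b 1 - (θ 0 + θ 1))/3) with hε
  have hεpos : 0 < ε := lt_min (by linarith) (by linarith)
  have hε1 : ε ≤ G/3 := min_le_left _ _
  have hε2 : ε ≤ (b 1 - (θ 0 + θ 1))/3 := min_le_right _ _
  set w : Fin 2 → ℝ := fun j => θ j + ε with hw
  have hwnn : ∀ j, 0 ≤ w j := fun j => by have := hθ j; simp only [hw]; linarith
  have hWnn : ∀ i j, 0 ≤ (![θ, w] : Fin 2 → Fin 2 → ℝ) i j := prof_nonneg hθ hwnn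
  have hFW := M.feas ![θ, w] hWnn
  have hxb := hFW.1
  have hirW := M.ir ![θ, w] hWnn 1
  rw [av1] at hirW
  have hq2 : M.Q ![θ, w] 1 ≤ θ 0 + θ 1 + 2*ε := by
    have h10 := hxb 1 0
    have h11 := hxb 1 1
    have e0 : w 0 = θ 0 + ε := rfl
    have e1 : w 1 = θ 1 + ε := rfl
    rw [e0, e1] at hirW
    nlinarith [hθ 0, hθ 1, hεpos]
  have hq2lt : M.Q ![θ, w] 1 < b 1 := by linarith
  have hx0 : ∀ j, M.X ![θ, w] 0 j = 0 := by
    intro j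
    by_contra hne
    have hpos : 0 < M.X ![θ, w] 0 j := lt_of_le_of_ne (hxb 0 j).1 (Ne.symm hne)
    have hvv : (![θ, w] : Fin 2 → Fin 2 → ℝ) 0 j < (![θ, w] : Fin 2 → Fin 2 → ℝ) 1 j := by
      show θ j < w j
      simp only [hw]; linarith
    exact L2buy1 (M.po ![θ,w] hWnn) hFW (M.budget ![θ,w] hWnn) hWnn j hvv hpos hq2lt
  have hx1 : ∀ j, M.X ![θ, w] 1 j = 1 := by
    intro j
    have := fullalloc M ![θ,w] hWnn j 1
      (show (0:ℝ) < (![θ, w] : Fin 2 → Fin 2 → ℝ) 1 j by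
        show (0:ℝ) < w j
        have := hθ j; simp only [hw]; linarith)
    rw [hx0 j] at this; linarith
  have hfin : z' 0 + z' 1 - M.Q ![θ,w] 1 ≤
      agentValue ![θ, z'] (M.X ![θ, z']) 1 - M.Q ![θ, z'] 1 := by
    have hIC := M.ic ![θ, z'] (prof_nonneg hθ hz') 1 w hwnn
    rw [upd1] at hIC
    calc z' 0 + z' 1 - M.Q ![θ,w] 1
        = agentValue ![θ, z'] (M.X ![θ, w]) 1 - M.Q ![θ, w] 1 := by
          rw [av1, hx1 0, hx1 1]; ring
      _ ≤ _ := hIC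
  simp only [hG] at hGpos hε1
  linarith

/-- if the poor agent's reported values are below the rich agent's (and its total below
the rich budget), it receives nothing. -/
lemma zeroregX (M : DetM b) (z : Fin 2 → ℝ) (hz0 : 0 < z 0) (hz1 : 0 < z 1)
    (θ : Fin 2 → ℝ) (hθnn : ∀ j, 0 ≤ θ j) (h0 : θ 0 < z 0) (h1 : θ 1 < z 1)
    (hB : θ 0 + θ 1 < b 1) : M.X ![θ, z] 0 0 = 0 ∧ M.X ![θ, z] 0 1 = 0 := by
  have hznn : ∀ j, 0 ≤ z j := fun j => by
    rcases fin2cases j with rfl | rfl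
    exacts [hz0.le, hz1.le]
  have hVnn := prof_nonneg hθnn hznn
  have hF := M.feas ![θ,z] hVnn
  have hq2lt : M.Q ![θ,z] 1 < b 1 := by
    rcases lt_or_ge (M.Q ![θ,z] 1) (b 1) with h | hge
    · exact h
    · exfalso
      have heq : M.Q ![θ,z] 1 = b 1 := le_antisymm (M.budget ![θ,z] hVnn 1) hge
      have hs := secure2 M θ z hθnn hznn hB
      rw [av1, heq] at hs
      have h10 := hF.1 1 0
      have h11 := hF.1 1 1
      nlinarith
  constructor
  · by_contra hne
    have hpos : 0 < M.X ![θ, z] 0 0 := lt_of_le_of_ne (hF.1 0 0).1 (Ne.symm hne)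
    exact L2buy1 (M.po ![θ,z] hVnn) hF (M.budget ![θ,z] hVnn) hVnn 0 h0 hpos hq2lt
  · by_contra hne
    have hpos : 0 < M.X ![θ, z] 0 1 := lt_of_le_of_ne (hF.1 0 1).1 (Ne.symm hne)
    exact L2buy1 (M.po ![θ,z] hVnn) hF (M.budget ![θ,z] hVnn) hVnn 1 h1 hpos hq2lt

/-- moreover, in the zero region the poor agent pays exactly `0`. -/
lemma zeroregQ (M : DetM b) (hb0 : 0 < b 0) (hb01 : b 0 < b 1)
    (z : Fin 2 → ℝ) (hz0 : 0 < z 0) (hz1 : 0 < z 1)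
    (θ : Fin 2 → ℝ) (hθnn : ∀ j, 0 ≤ θ j) (h0 : θ 0 < z 0) (h1 : θ 1 < z 1)
    (hB : θ 0 + θ 1 < b 1) : M.Q ![θ, z] 0 = 0 := by
  have hznn : ∀ j, 0 ≤ z j := fun j => by
    rcases fin2cases j with rfl | rfl
    exacts [hz0.le, hz1.le]
  have hVnn := prof_nonneg hθnn hznn
  have hx := zeroregX M z hz0 hz1 θ hθnn h0 h1 hB
  have hQle : M.Q ![θ,z] 0 ≤ 0 := by
    have hIR := M.ir ![θ,z] hVnn 0
    rw [av0, hx.1, hx.2] at hIR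
    linarith
  rcases eq_or_lt_of_le hQle with h | hQneg
  · exact h
  exfalso
  set c : ℝ := -(M.Q ![θ,z] 0) with hc
  have hcpos : 0 < c := by simp only [hc]; linarith
  set ε : ℝ := min (min (z 0) (z 1) / 2) (min (b 1 / 4) (c / 4)) with hεdef
  have hεpos : 0 < ε := by
    apply lt_min
    · have := lt_min hz0 hz1; positivity
    · apply lt_min
      · linarith
      · linarith
  have hεz0 : ε < z 0 := by
    have h := min_le_left (min (z 0) (z 1) / 2) (min (b 1 / 4) (c / 4))
    have h2 : min (z 0) (z 1) ≤ z 0 := min_le_left _ _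
    have := lt_min hz0 hz1
    linarith
  have hεz1 : ε < z 1 := by
    have h := min_le_left (min (z 0) (z 1) / 2) (min (b 1 / 4) (c / 4))
    have h2 : min (z 0) (z 1) ≤ z 1 := min_le_right _ _
    have := lt_min hz0 hz1
    linarith
  have hεb : ε ≤ b 1 / 4 := le_trans (min_le_right _ _) (min_le_left _ _)
  have hεc : ε ≤ c / 4 := le_trans (min_le_right _ _) (min_le_right _ _)
  set tiny : Fin 2 → ℝ := fun _ => ε with htiny
  have htinynn : ∀ j, 0 ≤ tiny j := fun _ => hεpos.le
  have htB : tiny 0 + tiny 1 < b 1 := by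
    show ε + ε < b 1
    linarith
  have hTnn := prof_nonneg htinynn hznn
  have hxT := zeroregX M z hz0 hz1 tiny htinynn hεz0 hεz1 htB
  -- IC: true `tiny`, report `θ`
  have hIC := M.ic ![tiny, z] hTnn 0 θ hθnn
  rw [upd0, av0, av0, hx.1, hx.2, hxT.1, hxT.2] at hIC
  -- hIC : 0*ε + 0*ε - Q ![θ,z] 0 ≤ 0*ε + 0*ε - Q ![tiny,z] 0
  have hrev := M.rev ![tiny,z] hTnn
  have hsec := secure2 M tiny z htinynn hznn htB
  rw [av1] at hsec
  have hFT := M.feas ![tiny,z] hTnn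
  have h10 := hFT.1 1 0
  have h11 := hFT.1 1 1
  have hQT1 : M.Q ![tiny,z] 1 ≤ tiny 0 + tiny 1 := by nlinarith
  have htt : tiny 0 + tiny 1 = ε + ε := rfl
  simp only [hc] at hcpos hεc
  rw [htt] at hQT1
  simp only [zero_mul, zero_add, add_zero] at hIC
  linarith

end MechLemmas


section MechLemmas2

variable {b : Fin 2 → ℝ}

/-- temptation cap: at any report against `z`, the poor agent's payment is at least the
`z`-value of its bundle (else some type just below `z` would envy). -/
lemma cap (M : DetM b) (hb0 : 0 < b 0) (hb01 : b 0 < b 1)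
    (z : Fin 2 → ℝ) (hz0 : 0 < z 0) (hz1 : 0 < z 1) (hzB : z 0 + z 1 < b 1)
    (θ'' : Fin 2 → ℝ) (hθ'' : ∀ j, 0 ≤ θ'' j) :
    z 0 * M.X ![θ'', z] 0 0 + z 1 * M.X ![θ'', z] 0 1 ≤ M.Q ![θ'', z] 0 := by
  have hznn : ∀ j, 0 ≤ z j := fun j => by
    rcases fin2cases j with rfl | rfl
    exacts [hz0.le, hz1.le]
  have hF'' := M.feas ![θ'', z] (prof_nonneg hθ'' hznn)
  set S : ℝ := z 0 * M.X ![θ'', z] 0 0 + z 1 * M.X ![θ'', z] 0 1 with hS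
  have hSnn : 0 ≤ S := by
    have h1 := (hF''.1 0 0).1
    have h2 := (hF''.1 0 1).1
    have := mul_nonneg hz0.le h1
    have := mul_nonneg hz1.le h2
    simp only [hS]; linarith
  have key : ∀ ε : ℝ, 0 < ε → ε < 1 → (1-ε) * S ≤ M.Q ![θ'', z] 0 := by
    intro ε hε hε1
    set θ' : Fin 2 → ℝ := fun j => (1-ε) * z j with hθ'
    have hθ'nn : ∀ j, 0 ≤ θ' j := fun j => by
      have := hznn j; simp only [hθ']; nlinarith
    have hc0 : θ' 0 < z 0 := by
      show (1-ε) * z 0 < z 0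
      nlinarith
    have hc1 : θ' 1 < z 1 := by
      show (1-ε) * z 1 < z 1
      nlinarith
    have hcB : θ' 0 + θ' 1 < b 1 := by
      show (1-ε) * z 0 + (1-ε) * z 1 < b 1
      nlinarith
    have hx' := zeroregX M z hz0 hz1 θ' hθ'nn hc0 hc1 hcB
    have hq' := zeroregQ M hb0 hb01 z hz0 hz1 θ' hθ'nn hc0 hc1 hcB
    have hIC := M.ic ![θ', z] (prof_nonneg hθ'nn hznn) 0 θ'' hθ''
    rw [upd0, av0, av0, hx'.1, hx'.2, hq'] at hIC
    have e0 : θ' 0 = (1-ε) * z 0 := rfl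
    have e1 : θ' 1 = (1-ε) * z 1 := rfl
    rw [e0, e1] at hIC
    simp only [hS]
    nlinarith [hIC]
  rcases le_or_gt S (M.Q ![θ'', z] 0) with h | hgt
  · exact h
  exfalso
  rcases eq_or_lt_of_le hSnn with hS0 | hSpos
  · have h2 := key (1/2) (by norm_num) (by norm_num)
    rw [← hS0] at h2
    simp at h2
    linarith
  · rcases lt_or_ge (-S) (M.Q ![θ'', z] 0) with hc | hc
    · set ε : ℝ := (S - M.Q ![θ'', z] 0) / (2*S) with hεd
      have hεpos : 0 < ε := div_pos (by linarith) (by linarith)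
      have hεlt : ε < 1 := by
        rw [hεd, div_lt_one (by linarith : (0:ℝ) < 2*S)]
        linarith
      have h2 := key ε hεpos hεlt
      rw [hεd] at h2
      have : (1 - (S - M.Q ![θ'', z] 0) / (2*S)) * S = S - (S - M.Q ![θ'', z] 0)/2 := by
        field_simp
      rw [this] at h2
      linarith
    · have h2 := key (1/2) (by norm_num) (by norm_num)
      linarith

/-- forced outcome in the C-region. -/
lemma D5gen (M : DetM b) (hb0 : 0 < b 0) (hb01 : b 0 < b 1)
    (za zb : ℝ) (hza : b 0 < za) (hzb : 0 < zb) (hzB : za + zb < b 1)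
    (θ : Fin 2 → ℝ) (hθnn : ∀ j, 0 ≤ θ j) (hθ0 : za < θ 0)
    (hθ1a : zb < θ 1) (hθ1b : θ 1 < b 0) (hratio : θ 0 * zb < θ 1 * za) :
    M.Q ![θ, ![za, zb]] 0 = b 0 ∧ M.X ![θ, ![za, zb]] 0 1 = 1 ∧
      M.X ![θ, ![za, zb]] 1 1 = 0 ∧
      za * M.X ![θ, ![za, zb]] 0 0 + zb ≤ b 0 ∧
      b 0 ≤ θ 0 * M.X ![θ, ![za, zb]] 0 0 + θ 1 := by
  set z : Fin 2 → ℝ := ![za, zb] with hzdef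
  have ez0 : z 0 = za := rfl
  have ez1 : z 1 = zb := rfl
  have hz0 : 0 < z 0 := by rw [ez0]; linarith
  have hz1 : 0 < z 1 := by rw [ez1]; linarith
  have hzB' : z 0 + z 1 < b 1 := by rw [ez0, ez1]; linarith
  have hznn : ∀ j, 0 ≤ z j := fun j => by
    rcases fin2cases j with rfl | rfl
    exacts [hz0.le, hz1.le]
  have hVnn := prof_nonneg hθnn hznn
  have hF := M.feas ![θ, z] hVnn
  have hcap := cap M hb0 hb01 z hz0 hz1 hzB' θ hθnn
  rw [ez0, ez1] at hcap
  have hbud := M.budget ![θ, z] hVnn 0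
  -- evaluations of the profile
  have ev00 : (![θ, z] : Fin 2 → Fin 2 → ℝ) 0 0 = θ 0 := rfl
  have ev01 : (![θ, z] : Fin 2 → Fin 2 → ℝ) 0 1 = θ 1 := rfl
  have ev10 : (![θ, z] : Fin 2 → Fin 2 → ℝ) 1 0 = za := rfl
  have ev11 : (![θ, z] : Fin 2 → Fin 2 → ℝ) 1 1 = zb := rfl
  -- (a) the poor agent pays exactly its budget
  have hQ : M.Q ![θ, z] 0 = b 0 := by
    rcases eq_or_lt_of_le hbud with h | hlt
    · exact h
    exfalso
    -- poor has slack, so it takes both items fully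
    have hx10 : M.X ![θ, z] 1 0 = 0 := by
      by_contra hne
      have hpos : 0 < M.X ![θ, z] 1 0 := lt_of_le_of_ne (hF.1 1 0).1 (Ne.symm hne)
      exact L2buy0 (M.po ![θ,z] hVnn) hF (M.budget ![θ,z] hVnn) hVnn 0
        (by rw [ev00, ev10]; linarith) hpos hlt
    have hx11 : M.X ![θ, z] 1 1 = 0 := by
      by_contra hne
      have hpos : 0 < M.X ![θ, z] 1 1 := lt_of_le_of_ne (hF.1 1 1).1 (Ne.symm hne)
      exact L2buy0 (M.po ![θ,z] hVnn) hF (M.budget ![θ,z] hVnn) hVnn 1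
        (by rw [ev01, ev11]; linarith) hpos hlt
    have hfa0 := fullalloc M ![θ,z] hVnn 0 0 (by rw [ev00]; linarith)
    have hfa1 := fullalloc M ![θ,z] hVnn 1 0 (by rw [ev01]; linarith)
    rw [hx10] at hfa0
    rw [hx11] at hfa1
    rw [show M.X ![θ,z] 0 0 = 1 by linarith, show M.X ![θ,z] 0 1 = 1 by linarith] at hcap
    linarith
  -- (b) the poor agent holds some of item 0
  have hx00pos : 0 < M.X ![θ, z] 0 0 := by
    rcases eq_or_lt_of_le (hF.1 0 0).1 with h | h
    · exfalso
      have hIR := M.ir ![θ,z] hVnn 0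
      rw [av0, ← h, hQ] at hIR
      have h01 := (hF.1 0 1).2
      nlinarith [hθnn 1]
    · exact h
  -- (c) the rich agent holds nothing of item 1
  have hx11 : M.X ![θ, z] 1 1 = 0 := by
    rcases eq_or_lt_of_le (hF.1 1 1).1 with h | h
    · exact h.symm
    exfalso
    exact L3' (M.po ![θ,z] hVnn) hF (M.budget ![θ,z] hVnn) hVnn
      (by rw [ev00]; linarith) (by rw [ev10]; linarith)
      (by rw [ev00, ev01, ev10, ev11]; linarith) hx00pos h
  have hx01 : M.X ![θ, z] 0 1 = 1 := by
    have := fullalloc M ![θ,z] hVnn 1 0 (by rw [ev01]; linarith)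
    rw [hx11] at this; linarith
  have hIR := M.ir ![θ,z] hVnn 0
  rw [av0, hx01, hQ] at hIR
  refine ⟨hQ, hx01, hx11, ?_, ?_⟩
  · rw [hx01] at hcap
    rw [hQ] at hcap
    linarith
  · linarith

end MechLemmas2


section Final

variable {b : Fin 2 → ℝ}

/-- the basic "small parameter". -/
noncomputable def pv (b : Fin 2 → ℝ) : ℝ := (min (b 0) (b 1 - b 0))/3

/-- the poor agent's fixed valuation row. -/
noncomputable def row0 (b : Fin 2 → ℝ) : Fin 2 → ℝ := ![b 0 + pv b, pv b]

lemma pv_pos (hb0 : 0 < b 0) (hb01 : b 0 < b 1) : 0 < pv b := by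
  have : 0 < min (b 0) (b 1 - b 0) := lt_min hb0 (by linarith)
  simp only [pv]; linarith

lemma pv_lt (hb0 : 0 < b 0) (hb01 : b 0 < b 1) : pv b < b 0 := by
  have h := min_le_left (b 0) (b 1 - b 0)
  simp only [pv]; linarith

lemma pv_sum (hb0 : 0 < b 0) (hb01 : b 0 < b 1) : b 0 + 3 * pv b ≤ b 1 := by
  have h := min_le_right (b 0) (b 1 - b 0)
  simp only [pv]; linarith

lemma row0_nonneg (hb0 : 0 < b 0) (hb01 : b 0 < b 1) : ∀ j, 0 ≤ row0 b j := by
  intro j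
  have hp := pv_pos hb0 hb01
  rcases fin2cases j with rfl | rfl
  · show (0:ℝ) ≤ b 0 + pv b
    linarith
  · show (0:ℝ) ≤ pv b
    linarith

/-- the forced crumb outcome against the fixed poor row. -/
lemma D5 (M : DetM b) (hb0 : 0 < b 0) (hb01 : b 0 < b 1) (za zb : ℝ)
    (h1 : b 0 < za) (h2 : za < b 0 + pv b) (h3 : 0 < zb) (h4 : zb ≤ pv b / 2) :
    M.X ![row0 b, ![za, zb]] 1 0 = 1 - (b 0 - zb)/za ∧
      M.X ![row0 b, ![za, zb]] 1 1 = 0 := by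
  have hp := pv_pos hb0 hb01
  have hplt := pv_lt hb0 hb01
  have hpsum := pv_sum hb0 hb01
  have hzB : za + zb < b 1 := by linarith
  have hrnn := row0_nonneg hb0 hb01
  have er0 : row0 b 0 = b 0 + pv b := rfl
  have er1 : row0 b 1 = pv b := rfl
  -- C-region conditions for the true row
  have hratio : row0 b 0 * zb < row0 b 1 * za := by
    rw [er0, er1]
    have hr1 : (b 0 + pv b) * zb ≤ (b 0 + pv b) * (pv b/2) :=
      mul_le_mul_of_nonneg_left h4 (by linarith)
    nlinarith
  have hmain := D5gen M hb0 hb01 za zb h1 h3 hzB (row0 b) hrnn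
    (by rw [er0]; linarith) (by rw [er1]; linarith) (by rw [er1]; linarith) hratio
  obtain ⟨hQ, hx01, hx11, hcapX, _⟩ := hmain
  have hznn : ∀ j, 0 ≤ (![za, zb] : Fin 2 → ℝ) j := fun j => by
    rcases fin2cases j with rfl | rfl
    · show (0:ℝ) ≤ za; linarith
    · show (0:ℝ) ≤ zb; linarith
  have hVnn := prof_nonneg hrnn hznn
  have hF := M.feas ![row0 b, ![za, zb]] hVnn
  obtain ⟨L, hL⟩ : ∃ L, M.X ![row0 b, ![za, zb]] 0 0 = L := ⟨_, rfl⟩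
  rw [hL] at hcapX
  have hX00nn : 0 ≤ L := by rw [← hL]; exact (hF.1 0 0).1
  -- lower bound on za * L via nearby reports
  set c : ℝ := za / (2 * (zb + 1)) with hc
  have hcpos : 0 < c := by
    rw [hc]
    exact div_pos (by linarith) (by linarith)
  have hczb : c * zb < za := by
    rw [hc]
    rw [div_mul_eq_mul_div, div_lt_iff₀ (by positivity)]
    nlinarith
  have main : ∀ ε : ℝ, 0 < ε → ε < (b 0 - zb)/2 →
      b 0 - zb - ε ≤ za * L + c * ε * L := by
    intro ε hε hεb
    have hcε : 0 < c * ε := mul_pos hcpos hε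
    have hθεnn : ∀ j, 0 ≤ (![za + c*ε, zb + ε] : Fin 2 → ℝ) j := fun j => by
      rcases fin2cases j with rfl | rfl
      · show (0:ℝ) ≤ za + c*ε
        linarith
      · show (0:ℝ) ≤ zb + ε
        linarith
    have hratε : (![za + c*ε, zb + ε] : Fin 2 → ℝ) 0 * zb
        < (![za + c*ε, zb + ε] : Fin 2 → ℝ) 1 * za := by
      show (za + c*ε) * zb < (zb + ε) * za
      have := mul_lt_mul_of_pos_left hczb hε
      nlinarith
    have hgε := D5gen M hb0 hb01 za zb h1 h3 hzB ![za + c*ε, zb + ε] hθεnn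
      (show za < (![za + c*ε, zb + ε] : Fin 2 → ℝ) 0 by
        show za < za + c*ε; linarith)
      (show zb < (![za + c*ε, zb + ε] : Fin 2 → ℝ) 1 by
        show zb < zb + ε; linarith)
      (show (![za + c*ε, zb + ε] : Fin 2 → ℝ) 1 < b 0 by
        show zb + ε < b 0; linarith)
      hratε
    obtain ⟨hQε, hx01ε, _, _, hIRε⟩ := hgε
    obtain ⟨Lε, hLε⟩ : ∃ Lε, M.X ![![za + c*ε, zb + ε], ![za, zb]] 0 0 = Lε := ⟨_, rfl⟩
    rw [hLε] at hIRε
    have hLεnn : 0 ≤ Lε := by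
      rw [← hLε]
      exact ((M.feas ![![za + c*ε, zb + ε], ![za, zb]] (prof_nonneg hθεnn hznn)).1 0 0).1
    -- IC: true row0, deviate to the nearby type
    have hIC := M.ic ![row0 b, ![za, zb]] hVnn 0 ![za + c*ε, zb + ε] hθεnn
    rw [upd0, av0, av0, hx01, hx01ε, hQ, hQε, er0, er1, hL, hLε] at hIC
    -- hIC : Lε * (b0 + pv) + 1*pv - b0 ≤ L * (b0 + pv) + 1*pv - b0
    have hle : Lε ≤ L := by
      have hpos : (0:ℝ) < b 0 + pv b := by linarith
      refine le_of_mul_le_mul_right ?_ hpos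
      linarith [hIC]
    have hmul : (za + c*ε) * Lε ≤ (za + c*ε) * L :=
      mul_le_mul_of_nonneg_left hle (by linarith)
    have he1 : (za + c*ε) * L = za * L + c * ε * L := by ring
    have he2 : (za + c*ε) * Lε = za * Lε + c * ε * Lε := by ring
    rw [he1, he2] at hmul
    -- hIRε is stated with the vector literal; normalize it
    have hIRε' : b 0 ≤ (za + c*ε) * Lε + (zb + ε) := by
      have e0 : (![za + c*ε, zb + ε] : Fin 2 → ℝ) 0 = za + c*ε := rfl
      have e1 : (![za + c*ε, zb + ε] : Fin 2 → ℝ) 1 = zb + ε := rfl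
      rw [e0, e1] at hIRε
      linarith [hIRε]
    rw [he2] at hIRε'
    linarith
  -- conclude za * L ≥ b0 - zb
  have hlow : b 0 - zb ≤ za * L := by
    by_contra hlt
    push_neg at hlt
    set G : ℝ := b 0 - zb - za * L with hG
    have hGpos : 0 < G := by simp only [hG]; linarith
    have hbzb : 0 < b 0 - zb := by linarith
    have hd : 0 < c * L + 1 := by positivity
    set ε : ℝ := min ((b 0 - zb)/4) (G / (2*(c * L + 1))) with hε
    have hεpos : 0 < ε := lt_min (by linarith) (div_pos hGpos (by linarith))
    have hεlt : ε < (b 0 - zb)/2 := by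
      have := min_le_left ((b 0 - zb)/4) (G / (2*(c * L + 1)))
      linarith
    have h2' := main ε hεpos hεlt
    have h3' : c * ε * L + ε ≤ G/2 := by
      have h := min_le_right ((b 0 - zb)/4) (G / (2*(c * L + 1)))
      have hcalc : ε * (c * L + 1) ≤ G/2 := by
        calc ε * (c * L + 1)
            ≤ (G / (2*(c * L + 1))) * (c * L + 1) :=
              mul_le_mul_of_nonneg_right h (by linarith)
          _ = G/2 := by field_simp
      nlinarith [hcalc]
    simp only [hG] at hGpos h3'
    linarith
  have hupp : za * L ≤ b 0 - zb := by linarith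
  have heq : L = (b 0 - zb)/za := by
    rw [eq_div_iff (by linarith : za ≠ 0)]
    have := mul_comm za L
    linarith
  have hfa := fullalloc M ![row0 b, ![za, zb]] hVnn 0 0
    (show (0:ℝ) < (![row0 b, ![za, zb]] : Fin 2 → Fin 2 → ℝ) 0 0 by
      show (0:ℝ) < row0 b 0
      rw [er0]; linarith)
  rw [hL, heq] at hfa
  constructor
  · linarith
  · exact hx11

end Final

set_option maxHeartbeats 1600000 in
theorem det_impossible (b : Fin 2 → ℝ) (hb0 : 0 < b 0) (hb01 : b 0 < b 1)
    (M : DetM b) : False := by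
  have hp := pv_pos hb0 hb01
  have hplt := pv_lt hb0 hb01
  have hpsum := pv_sum hb0 hb01
  have hrnn := row0_nonneg hb0 hb01
  -- the three rich reports
  have hz1nn : ∀ j, 0 ≤ (![b 0 + pv b/4, pv b/2] : Fin 2 → ℝ) j := fun j => by
    rcases fin2cases j with rfl | rfl
    · show (0:ℝ) ≤ b 0 + pv b/4; linarith
    · show (0:ℝ) ≤ pv b/2; linarith
  have hz2nn : ∀ j, 0 ≤ (![b 0 + pv b/2, pv b/4] : Fin 2 → ℝ) j := fun j => by
    rcases fin2cases j with rfl | rfl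
    · show (0:ℝ) ≤ b 0 + pv b/2; linarith
    · show (0:ℝ) ≤ pv b/4; linarith
  have hz3nn : ∀ j, 0 ≤ (![b 0 + pv b/4, pv b/4] : Fin 2 → ℝ) j := fun j => by
    rcases fin2cases j with rfl | rfl
    · show (0:ℝ) ≤ b 0 + pv b/4; linarith
    · show (0:ℝ) ≤ pv b/4; linarith
  -- forced allocations at the three profiles
  have hD1 := D5 M hb0 hb01 (b 0 + pv b/4) (pv b/2)
    (by linarith) (by linarith) (by linarith) (by linarith)
  have hD2 := D5 M hb0 hb01 (b 0 + pv b/2) (pv b/4)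
    (by linarith) (by linarith) (by linarith) (by linarith)
  have hD3 := D5 M hb0 hb01 (b 0 + pv b/4) (pv b/4)
    (by linarith) (by linarith) (by linarith) (by linarith)
  -- abstract the three per-unit "discounts"
  obtain ⟨G1, hG1⟩ : ∃ g, (b 0 - pv b/2)/(b 0 + pv b/4) = g := ⟨_, rfl⟩
  obtain ⟨G2, hG2⟩ : ∃ g, (b 0 - pv b/4)/(b 0 + pv b/2) = g := ⟨_, rfl⟩
  obtain ⟨G3, hG3⟩ : ∃ g, (b 0 - pv b/4)/(b 0 + pv b/4) = g := ⟨_, rfl⟩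
  rw [hG1] at hD1
  rw [hG2] at hD2
  rw [hG3] at hD3
  -- abstract the three payments of agent 1
  obtain ⟨Q1, hQ1⟩ : ∃ q, M.Q ![row0 b, ![b 0 + pv b/4, pv b/2]] 1 = q := ⟨_, rfl⟩
  obtain ⟨Q2, hQ2⟩ : ∃ q, M.Q ![row0 b, ![b 0 + pv b/2, pv b/4]] 1 = q := ⟨_, rfl⟩
  obtain ⟨Q3, hQ3⟩ : ∃ q, M.Q ![row0 b, ![b 0 + pv b/4, pv b/4]] 1 = q := ⟨_, rfl⟩
  -- evaluation lemmas for the report vectors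
  have e10 : (![b 0 + pv b/4, pv b/2] : Fin 2 → ℝ) 0 = b 0 + pv b/4 := rfl
  have e11 : (![b 0 + pv b/4, pv b/2] : Fin 2 → ℝ) 1 = pv b/2 := rfl
  have e20 : (![b 0 + pv b/2, pv b/4] : Fin 2 → ℝ) 0 = b 0 + pv b/2 := rfl
  have e21 : (![b 0 + pv b/2, pv b/4] : Fin 2 → ℝ) 1 = pv b/4 := rfl
  have e30 : (![b 0 + pv b/4, pv b/4] : Fin 2 → ℝ) 0 = b 0 + pv b/4 := rfl
  have e31 : (![b 0 + pv b/4, pv b/4] : Fin 2 → ℝ) 1 = pv b/4 := rfl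
  -- the three incentive constraints of the rich agent
  have hI1 := M.ic ![row0 b, ![b 0 + pv b/4, pv b/2]] (prof_nonneg hrnn hz1nn) 1
    ![b 0 + pv b/4, pv b/4] hz3nn
  rw [upd1, av1, av1, hD3.1, hD3.2, hD1.1, hD1.2, hQ3, hQ1, e10, e11] at hI1
  -- hI1 : (1-G3)*(b0+p/4) + 0*(p/2) - Q3 ≤ (1-G1)*(b0+p/4) + 0*(p/2) - Q1
  have hI2 := M.ic ![row0 b, ![b 0 + pv b/4, pv b/4]] (prof_nonneg hrnn hz3nn) 1
    ![b 0 + pv b/2, pv b/4] hz2nn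
  rw [upd1, av1, av1, hD2.1, hD2.2, hD3.1, hD3.2, hQ2, hQ3, e30, e31] at hI2
  have hI3 := M.ic ![row0 b, ![b 0 + pv b/2, pv b/4]] (prof_nonneg hrnn hz2nn) 1
    ![b 0 + pv b/4, pv b/2] hz1nn
  rw [upd1, av1, av1, hD1.1, hD1.2, hD2.1, hD2.2, hQ1, hQ2, e20, e21] at hI3
  -- summing the cycle pins down the discounts
  have hfin : G2 * pv b ≤ G1 * pv b := by nlinarith [hI1, hI2, hI3]
  have hG2G1 : G2 ≤ G1 := le_of_mul_le_mul_right hfin hp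
  rw [← hG1, ← hG2] at hG2G1
  have hcross := (div_le_div_iff₀ (by linarith) (by linarith)).mp hG2G1
  -- (b0 - p/4)*(b0 + p/4) ≤ (b0 - p/2)*(b0 + p/2): impossible for p > 0
  nlinarith [mul_pos hp hp]

end Stmt9Aux

/-- impossibility for randomized mechanisms, multi-dimensional valuations:
for 2 agents, 2 items, and public budgets `0 < b 1 < b 2` (Lean indices 0,1), there is no
randomized mechanism `v ↦ μ_v` (a probability measure on allocation/payment pairs, a.s.
feasible and budget-respecting, with integrable coordinates) that is IR ex interim,
PO ex interim, and IC ex interim. -/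
theorem stmt9 (b : Fin 2 → ℝ) (hb0 : 0 < b 0) (hb01 : b 0 < b 1) :
    ¬ ∃ μ : (Fin 2 → Fin 2 → ℝ) → Measure ((Fin 2 → Fin 2 → ℝ) × (Fin 2 → ℝ)),
        ∀ v : Fin 2 → Fin 2 → ℝ, (∀ i j, 0 ≤ v i j) →
          IsProbabilityMeasure (μ v) ∧
          (∀ᵐ ω ∂(μ v), Feasible 2 2 ω.1 ∧ ∀ i, ω.2 i ≤ b i) ∧
          (∀ i j, Integrable (fun ω => ω.1 i j) (μ v)) ∧
          (∀ i, Integrable (fun ω => ω.2 i) (μ v)) ∧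
          -- IR ex interim
          (∀ i, 0 ≤ ∫ ω, (agentValue v ω.1 i - ω.2 i) ∂(μ v)) ∧
          (0 ≤ ∫ ω, (∑ i, ω.2 i) ∂(μ v)) ∧
          -- PO ex interim: the expected outcome is Pareto optimal
          PO b v (fun i j => ∫ ω, ω.1 i j ∂(μ v)) (fun i => ∫ ω, ω.2 i ∂(μ v)) ∧
          -- IC ex interim
          (∀ (i : Fin 2) (v'i : Fin 2 → ℝ), (∀ j, 0 ≤ v'i j) →
            (∫ ω, (agentValue v ω.1 i - ω.2 i) ∂(μ (Function.update v i v'i))) ≤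
              ∫ ω, (agentValue v ω.1 i - ω.2 i) ∂(μ v)) := by
  rintro ⟨μ, hμ⟩
  -- expected allocation and payments
  -- key: the interim utilities are the utilities of the expected outcome
  have key : ∀ v' : Fin 2 → Fin 2 → ℝ, (∀ i j, 0 ≤ v' i j) →
      ∀ (vv : Fin 2 → Fin 2 → ℝ) (i : Fin 2),
      ∫ ω, (agentValue vv ω.1 i - ω.2 i) ∂(μ v') =
        agentValue vv (fun i' j' => ∫ ω, ω.1 i' j' ∂(μ v')) i - ∫ ω, ω.2 i ∂(μ v') := by
    intro v' hv' vv i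
    obtain ⟨hprob, hae, hix, hip, -⟩ := hμ v' hv'
    have h0 : Integrable (fun ω : (Fin 2 → Fin 2 → ℝ) × (Fin 2 → ℝ) =>
        ω.1 i 0 * vv i 0) (μ v') := (hix i 0).mul_const _
    have h1 : Integrable (fun ω : (Fin 2 → Fin 2 → ℝ) × (Fin 2 → ℝ) =>
        ω.1 i 1 * vv i 1) (μ v') := (hix i 1).mul_const _
    have hadd : Integrable (fun ω : (Fin 2 → Fin 2 → ℝ) × (Fin 2 → ℝ) =>
        ω.1 i 0 * vv i 0 + ω.1 i 1 * vv i 1) (μ v') := h0.add h1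
    simp only [agentValue, Fin.sum_univ_two]
    rw [integral_sub hadd (hip i), integral_add h0 h1,
      integral_mul_const, integral_mul_const]
  refine Stmt9Aux.det_impossible b hb0 hb01 ?_
  refine ⟨fun v i j => ∫ ω, ω.1 i j ∂(μ v), fun v i => ∫ ω, ω.2 i ∂(μ v),
    ?_, ?_, ?_, ?_, ?_, ?_⟩
  · -- feasibility of the expected allocation
    intro v hv
    obtain ⟨hprob, hae, hix, hip, -⟩ := hμ v hv
    have hone : ∫ (_ : (Fin 2 → Fin 2 → ℝ) × (Fin 2 → ℝ)), (1:ℝ) ∂(μ v) = 1 := by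
      simp [integral_const]
    constructor
    · intro i j
      constructor
      · apply integral_nonneg_of_ae
        filter_upwards [hae] with ω hω
        exact (hω.1.1 i j).1
      · have h := integral_mono_ae (hix i j) (integrable_const 1)
          (by filter_upwards [hae] with ω hω; exact (hω.1.1 i j).2)
        rwa [hone] at h
    · intro j
      rw [Fin.sum_univ_two]
      have hsint : Integrable (fun ω : (Fin 2 → Fin 2 → ℝ) × (Fin 2 → ℝ) =>
          ω.1 0 j + ω.1 1 j) (μ v) := (hix 0 j).add (hix 1 j)
      have h := integral_mono_ae hsint (integrable_const 1)
        (by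
          filter_upwards [hae] with ω hω
          have h2 := hω.1.2 j
          rw [Fin.sum_univ_two] at h2
          exact h2)
      rw [hone, integral_add (hix 0 j) (hix 1 j)] at h
      exact h
  · -- budgets
    intro v hv i
    obtain ⟨hprob, hae, hix, hip, -⟩ := hμ v hv
    have h := integral_mono_ae (hip i) (integrable_const (b i))
      (by filter_upwards [hae] with ω hω; exact hω.2 i)
    simpa [integral_const] using h
  · -- IR
    intro v hv i
    have h := (hμ v hv).2.2.2.2.1 i
    rwa [key v hv v i] at h
  · -- nonnegative revenue
    intro v hv
    obtain ⟨hprob, hae, hix, hip, -, hrev, -⟩ := hμ v hv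
    have : (∫ ω, (∑ i, ω.2 i) ∂(μ v)) = (∫ ω, ω.2 0 ∂(μ v)) + ∫ ω, ω.2 1 ∂(μ v) := by
      rw [← integral_add (hip 0) (hip 1)]
      congr 1
      funext ω
      rw [Fin.sum_univ_two]
    rw [this] at hrev
    exact hrev
  · -- PO of the expected outcome
    intro v hv
    exact (hμ v hv).2.2.2.2.2.2.1
  · -- IC
    intro v hv i w hw
    have hupd : ∀ i' j', 0 ≤ Function.update v i w i' j' := by
      intro i' j'
      rcases eq_or_ne i' i with rfl | hne
      · rw [Function.update_self]
        exact hw j'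
      · rw [Function.update_of_ne hne]
        exact hv i' j'
    have h := (hμ v hv).2.2.2.2.2.2.2 i w hw
    rwa [key (Function.update v i w) hupd v i, key v hv v i] at h
end

section
/- In the single-dimensional setting with 2 agents and 2 indivisible items with qualities α 1 > α 2 > 0, suppose v 1 > v 2 > 0 and b 1 > α 1 * v 2. Then every outcome (x, p) that respects budgets, gives every agent nonnegative utility, and satisfies the no-trade condition (NT) allocates at least one item to agent 1, i.e., x 1 1 = 1 or x 1 2 = 1. -/
open Finset
open scoped Classical

/-- Agent `i`'s value in the single-dimensional setting: `(∑ j, x i j * α j) * v i`. -/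
def sValue {n m : ℕ} (α : Fin m → ℝ) (v : Fin n → ℝ) (x : Fin n → Fin m → ℝ)
    (i : Fin n) : ℝ :=
  (∑ j, x i j * α j) * v i

/-- The no-trade (NT) condition for an outcome `(x, p)` in the single-dimensional
indivisible setting. -/
def NTInd {n m : ℕ} (α : Fin m → ℝ) (v b : Fin n → ℝ) (x : Fin n → Fin m → ℝ)
    (p : Fin n → ℝ) : Prop :=
  (∀ j, ∑ i, x i j = 1) ∧
  ¬ ∃ x' : Fin n → Fin m → ℝ, FeasibleInd n m x' ∧
      (0 < ∑ i, (∑ j, (x' i j - x i j) * α j) * v i) ∧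
      0 ≤ (∑ i ∈ Finset.univ.filter (fun i => 0 < ∑ j, (x' i j - x i j) * α j),
            min (b i - p i) ((∑ j, (x' i j - x i j) * α j) * v i)) +
          ∑ i ∈ Finset.univ.filter (fun i => (∑ j, (x' i j - x i j) * α j) ≤ 0),
            (∑ j, (x' i j - x i j) * α j) * v i

/-- with 2 agents and 2 indivisible items, qualities `α 1 > α 2 > 0`,
valuations `v 1 > v 2 > 0`, and `b 1 > α 1 * v 2` (Lean indices 0,1), every outcome that
respects budgets, gives all agents nonnegative utility, and satisfies NT allocates at
least one item to agent 1. -/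
theorem stmt13 (α : Fin 2 → ℝ) (hα : α 1 < α 0) (hα2 : 0 < α 1)
    (v b : Fin 2 → ℝ) (hv : v 1 < v 0) (hv2 : 0 < v 1) (hb : ∀ i, 0 ≤ b i)
    (hb0 : α 0 * v 1 < b 0)
    (x : Fin 2 → Fin 2 → ℝ) (p : Fin 2 → ℝ)
    (hx : FeasibleInd 2 2 x) (hbud : ∀ i, p i ≤ b i)
    (hutil : ∀ i, 0 ≤ sValue α v x i - p i)
    (hNT : NTInd α v b x p) :
    x 0 0 = 1 ∨ x 0 1 = 1 := by
  by_contra h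
  push_neg at h
  obtain ⟨h00, h01⟩ := h
  have hx00 : x 0 0 = 0 := (hx.1 0 0).resolve_right h00
  have hx01 : x 0 1 = 0 := (hx.1 0 1).resolve_right h01
  have hsum0 := hNT.1 0
  have hsum1 := hNT.1 1
  rw [Fin.sum_univ_two] at hsum0 hsum1
  have hx10 : x 1 0 = 1 := by linarith
  have hx11 : x 1 1 = 1 := by linarith
  have hα0 : 0 < α 0 := hα2.trans hα
  have hp0 : p 0 ≤ 0 := by
    have := hutil 0
    simp [sValue, Fin.sum_univ_two, hx00, hx01] at this
    linarith
  apply hNT.2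
  refine ⟨fun i j => if i = j then 1 else 0,
    ⟨fun i j => by by_cases h : i = j <;> simp [h], fun j => by fin_cases j <;> simp⟩, ?_, ?_⟩
  · simp only [Fin.sum_univ_two]
    simp [hx00, hx01, hx10, hx11]
    nlinarith
  · rw [Finset.sum_filter, Finset.sum_filter, Fin.sum_univ_two, Fin.sum_univ_two]
    simp only [Fin.sum_univ_two]
    simp [hx00, hx01, hx10, hx11]
    rw [if_pos hα0, if_neg (not_lt.mpr hα0.le), if_neg (not_le.mpr hα0), if_pos hα0.le]
    have hm : α 0 * v 1 ≤ min (b 0 - p 0) (α 0 * v 0) :=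
      le_min (by linarith) (by nlinarith)
    nlinarith [min_le_left (b 0 - p 0) (α 0 * v 0)]
end

section
/- In the single-dimensional setting with 2 agents and 2 indivisible items with qualities α 1 > α 2 > 0, suppose v 1 > v 2 > 0. If an outcome (x, p) respects budgets, satisfies the no-trade condition (NT), and allocates exactly item 2 to agent 1 (x 1 1 = 0 and x 1 2 = 1), then agent 1's payment satisfies p 1 > b 1 − (α 1 − α 2) * v 2. -/
open Finset
open scoped Classical

/-- with 2 agents and 2 indivisible items, qualities `α 1 > α 2 > 0` and
valuations `v 1 > v 2 > 0` (Lean indices 0,1), if an outcome respects budgets, satisfies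
NT, and allocates exactly item 2 to agent 1 (`x 1 1 = 0`, `x 1 2 = 1`), then
`p 1 > b 1 − (α 1 − α 2) * v 2`. -/
theorem stmt14 (α : Fin 2 → ℝ) (hα : α 1 < α 0) (hα2 : 0 < α 1)
    (v b : Fin 2 → ℝ) (hv : v 1 < v 0) (hv2 : 0 < v 1) (hb : ∀ i, 0 ≤ b i)
    (x : Fin 2 → Fin 2 → ℝ) (p : Fin 2 → ℝ)
    (hx : FeasibleInd 2 2 x) (hbud : ∀ i, p i ≤ b i)
    (hNT : NTInd α v b x p)
    (h00 : x 0 0 = 0) (h01 : x 0 1 = 1) :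
    b 0 - (α 0 - α 1) * v 1 < p 0 := by
  by_contra hcon
  push_neg at hcon
  obtain ⟨hsum, hnt⟩ := hNT
  have h10 : x 1 0 = 1 := by have := hsum 0; rw [Fin.sum_univ_two] at this; linarith
  have h11 : x 1 1 = 0 := by have := hsum 1; rw [Fin.sum_univ_two] at this; linarith
  apply hnt
  set x' : Fin 2 → Fin 2 → ℝ := fun i j => if i = j then 1 else 0 with hx'
  have d0 : ∑ j, (x' 0 j - x 0 j) * α j = α 0 - α 1 := by
    rw [Fin.sum_univ_two]; simp [hx', h00, h01]; ring
  have d1 : ∑ j, (x' 1 j - x 1 j) * α j = α 1 - α 0 := by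
    rw [Fin.sum_univ_two]; simp [hx', h10, h11]; ring
  refine ⟨x', ⟨fun i j => by by_cases h : i = j <;> simp [hx', h], fun j => ?_⟩, ?_, ?_⟩
  · rw [Fin.sum_univ_two]; fin_cases j <;> simp [hx']
  · rw [Fin.sum_univ_two, d0, d1]
    nlinarith [mul_pos (by linarith : (0:ℝ) < α 0 - α 1) (by linarith : (0:ℝ) < v 0 - v 1)]
  · have hW : Finset.univ.filter (fun i => 0 < ∑ j, (x' i j - x i j) * α j) = {0} := by
      ext i
      simp only [Finset.mem_filter, Finset.mem_univ, true_and, Finset.mem_singleton]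
      fin_cases i <;>
        simp only [Fin.mk_zero, Fin.mk_one, Fin.isValue, d0, d1] <;>
        constructor <;> intro h <;>
        first | trivial | linarith | exact h.elim | exact absurd h (by decide)
    have hL : Finset.univ.filter (fun i => (∑ j, (x' i j - x i j) * α j) ≤ 0) = {1} := by
      ext i
      simp only [Finset.mem_filter, Finset.mem_univ, true_and, Finset.mem_singleton]
      fin_cases i <;>
        simp only [Fin.mk_zero, Fin.mk_one, Fin.isValue, d0, d1] <;>
        constructor <;> intro h <;>
        first | trivial | linarith | exact h.elim | exact absurd h (by decide)
    rw [hW, hL, Finset.sum_singleton, Finset.sum_singleton, d0, d1]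
    have hmin : (α 0 - α 1) * v 1 ≤ min (b 0 - p 0) ((α 0 - α 1) * v 0) := by
      apply le_min
      · linarith
      · apply mul_le_mul_of_nonneg_left <;> linarith
    nlinarith
end

section
/- In the single-dimensional setting with n agents and m divisible items, with qualities α strictly decreasing and positive and valuations v strictly decreasing and positive (v 1 > v 2 > … > v n > 0), let (x, p) be an outcome that respects budgets and satisfies: (a) ∑ i, x i j = 1 for every item j, and (b) for all agents i and i', if ∑ j, x i j > 0 and v i' > v i then p i' = b i'. Then (x, p) satisfies the no-trade condition (NT), and hence is Pareto optimal. -/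
open Finset
open scoped Classical

/-- A feasible (divisible) allocation: fractions in `[0,1]` and each item sold at most once.
Agents/items are indexed from `0` (paper's agent/item `k` is index `k-1`). -/
def FeasibleDiv (n m : ℕ) (x : Fin n → Fin m → ℝ) : Prop :=
  (∀ i j, 0 ≤ x i j ∧ x i j ≤ 1) ∧ ∀ j, ∑ i, x i j ≤ 1

/-- The no-trade (NT) condition for an outcome `(x, p)` in the single-dimensional
divisible setting. -/
def NT {n m : ℕ} (α : Fin m → ℝ) (v b : Fin n → ℝ) (x : Fin n → Fin m → ℝ)
    (p : Fin n → ℝ) : Prop :=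
  (∀ j, ∑ i, x i j = 1) ∧
  ¬ ∃ x' : Fin n → Fin m → ℝ, FeasibleDiv n m x' ∧
      (0 < ∑ i, (∑ j, (x' i j - x i j) * α j) * v i) ∧
      0 ≤ (∑ i ∈ Finset.univ.filter (fun i => 0 < ∑ j, (x' i j - x i j) * α j),
            min (b i - p i) ((∑ j, (x' i j - x i j) * α j) * v i)) +
          ∑ i ∈ Finset.univ.filter (fun i => (∑ j, (x' i j - x i j) * α j) ≤ 0),
            (∑ j, (x' i j - x i j) * α j) * v i

/-- Pareto optimality of an outcome `(x, p)` in the single-dimensional divisible setting. -/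
def POs {n m : ℕ} (α : Fin m → ℝ) (v b : Fin n → ℝ) (x : Fin n → Fin m → ℝ)
    (p : Fin n → ℝ) : Prop :=
  ¬ ∃ (x' : Fin n → Fin m → ℝ) (p' : Fin n → ℝ),
      FeasibleDiv n m x' ∧ (∀ i, p' i ≤ b i) ∧
      (∀ i, sValue α v x i - p i ≤ sValue α v x' i - p' i) ∧
      (∑ i, p i ≤ ∑ i, p' i) ∧
      ((∃ i, sValue α v x i - p i < sValue α v x' i - p' i) ∨ ∑ i, p i < ∑ i, p' i)

/-- in the single-dimensional divisible setting with strictly decreasing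
positive qualities and valuations, an outcome respecting budgets that (a) assigns every
item completely and (b) pays `p i' = b i'` whenever some agent `i` with `∑ j, x i j > 0`
has a smaller valuation than agent `i'`, satisfies NT and hence is PO. -/
theorem stmt16 (n m : ℕ) (α : Fin m → ℝ) (hα : StrictAnti α) (hαpos : ∀ j, 0 < α j)
    (v : Fin n → ℝ) (hv : StrictAnti v) (hvpos : ∀ i, 0 < v i)
    (b : Fin n → ℝ) (hb : ∀ i, 0 ≤ b i)
    (x : Fin n → Fin m → ℝ) (p : Fin n → ℝ)
    (hx : FeasibleDiv n m x) (hbud : ∀ i, p i ≤ b i)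
    (ha : ∀ j, ∑ i, x i j = 1)
    (hstruct : ∀ i i' : Fin n, 0 < ∑ j, x i j → v i < v i' → p i' = b i') :
    NT α v b x p ∧ POs α v b x p := by
  classical
  have hNT : NT α v b x p := by
    refine ⟨ha, ?_⟩
    rintro ⟨x', hfeas, hpos, hS⟩
    set D : Fin n → ℝ := fun i => ∑ j, (x' i j - x i j) * α j with hD
    have hpos' : 0 < ∑ i, D i * v i := hpos
    have hS' : 0 ≤ (∑ i ∈ Finset.univ.filter (fun i => 0 < D i),
          min (b i - p i) (D i * v i)) +
        ∑ i ∈ Finset.univ.filter (fun i => D i ≤ 0), D i * v i := hS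
    -- total trade is nonpositive
    have hsumδ : ∑ i, D i ≤ 0 := by
      have h1 : ∑ i, D i = ∑ j, (∑ i, x' i j - 1) * α j := by
        simp only [hD]
        rw [Finset.sum_comm]
        refine Finset.sum_congr rfl fun j _ => ?_
        rw [← Finset.sum_mul, Finset.sum_sub_distrib, ha j]
      rw [h1]
      refine Finset.sum_nonpos fun j _ => ?_
      have := hfeas.2 j
      exact mul_nonpos_of_nonpos_of_nonneg (by linarith) (hαpos j).le
    -- a winner exists
    have hW : ∃ i, 0 < D i := by
      by_contra h
      push_neg at h
      have : ∑ i, D i * v i ≤ 0 :=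
        Finset.sum_nonpos fun i _ => mul_nonpos_of_nonpos_of_nonneg (h i) (hvpos i).le
      linarith
    obtain ⟨i1, hi1⟩ := hW
    -- a strict loser exists
    have hLne : (Finset.univ.filter (fun i => D i < 0)).Nonempty := by
      by_contra h
      rw [Finset.not_nonempty_iff_eq_empty, Finset.filter_eq_empty_iff] at h
      have hnn : ∀ i ∈ (Finset.univ : Finset (Fin n)), 0 ≤ D i := by
        intro i _
        have := h (Finset.mem_univ i)
        linarith [not_lt.mp this]
      have := Finset.single_le_sum hnn (Finset.mem_univ i1)
      linarith
    obtain ⟨k, hkmem, hkmin⟩ := Finset.exists_min_image _ v hLne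
    have hk : D k < 0 := (Finset.mem_filter.mp hkmem).2
    -- k has positive allocation under x
    have hkT : 0 < ∑ j, x k j := by
      have hx'nn : 0 ≤ ∑ j, x' k j * α j :=
        Finset.sum_nonneg fun j _ => mul_nonneg (hfeas.1 k j).1 (hαpos j).le
      have hDalt : D k = (∑ j, x' k j * α j) - ∑ j, x k j * α j := by
        simp [hD, sub_mul, Finset.sum_sub_distrib]
      have hxkpos : 0 < ∑ j, x k j * α j := by linarith
      by_contra h
      push_neg at h
      have hz : ∑ j, x k j = 0 :=
        le_antisymm h (Finset.sum_nonneg fun j _ => (hx.1 k j).1)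
      have hall : ∀ j ∈ (Finset.univ : Finset (Fin m)), x k j = 0 :=
        (Finset.sum_eq_zero_iff_of_nonneg (fun j _ => (hx.1 k j).1)).mp hz
      have : ∑ j, x k j * α j = 0 :=
        Finset.sum_eq_zero fun j hj => by rw [hall j hj, zero_mul]
      linarith
    have hexh : ∀ i, v k < v i → p i = b i := fun i hi => hstruct k i hkT hi
    -- key strict bound for winners
    have claim1 : ∀ i ∈ Finset.univ.filter (fun i => 0 < D i),
        min (b i - p i) (D i * v i) < D i * v k := by
      intro i hi
      have hDi : 0 < D i := (Finset.mem_filter.mp hi).2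
      rcases lt_trichotomy (v i) (v k) with h | h | h
      · calc min (b i - p i) (D i * v i) ≤ D i * v i := min_le_right _ _
          _ < D i * v k := by exact mul_lt_mul_of_pos_left h hDi
      · exfalso
        have : i = k := hv.injective h
        rw [this] at hDi; linarith
      · have hpb : p i = b i := hexh i h
        calc min (b i - p i) (D i * v i) ≤ b i - p i := min_le_left _ _
          _ = 0 := by rw [hpb]; ring
          _ < D i * v k := mul_pos hDi (hvpos k)
    -- bound for losers
    have claim2 : ∀ i ∈ Finset.univ.filter (fun i => D i ≤ 0),
        D i * v i ≤ D i * v k := by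
      intro i hi
      have hDi : D i ≤ 0 := (Finset.mem_filter.mp hi).2
      rcases eq_or_lt_of_le hDi with h | h
      · simp [h]
      · have hkv : v k ≤ v i := hkmin i (Finset.mem_filter.mpr ⟨Finset.mem_univ i, h⟩)
        exact mul_le_mul_of_nonpos_left hkv hDi
    have hWne : (Finset.univ.filter (fun i => 0 < D i)).Nonempty :=
      ⟨i1, Finset.mem_filter.mpr ⟨Finset.mem_univ i1, hi1⟩⟩
    have sum1 : ∑ i ∈ Finset.univ.filter (fun i => 0 < D i), min (b i - p i) (D i * v i)
        < ∑ i ∈ Finset.univ.filter (fun i => 0 < D i), D i * v k :=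
      Finset.sum_lt_sum_of_nonempty hWne claim1
    have sum2 : ∑ i ∈ Finset.univ.filter (fun i => D i ≤ 0), D i * v i
        ≤ ∑ i ∈ Finset.univ.filter (fun i => D i ≤ 0), D i * v k :=
      Finset.sum_le_sum claim2
    have hLset : Finset.univ.filter (fun i => D i ≤ 0)
        = Finset.univ.filter (fun i => ¬ 0 < D i) := by
      apply Finset.filter_congr
      intro i _
      simp [not_lt]
    have total : (∑ i ∈ Finset.univ.filter (fun i => 0 < D i), D i * v k) +
        ∑ i ∈ Finset.univ.filter (fun i => D i ≤ 0), D i * v k = (∑ i, D i) * v k := by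
      rw [hLset, Finset.sum_filter_add_sum_filter_not, Finset.sum_mul]
    have htot : (∑ i, D i) * v k ≤ 0 :=
      mul_nonpos_of_nonpos_of_nonneg hsumδ (hvpos k).le
    linarith
  refine ⟨hNT, ?_⟩
  rintro ⟨x', p', hfeas, hp'b, himp, hpsum, hstrict⟩
  apply hNT.2
  refine ⟨x', hfeas, ?_, ?_⟩
  · -- strict total gain
    have key : ∀ i, (∑ j, (x' i j - x i j) * α j) * v i
        = (sValue α v x' i - p' i) - (sValue α v x i - p i) + (p' i - p i) := by
      intro i
      simp only [sValue]
      rw [show (∑ j, (x' i j - x i j) * α j)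
          = (∑ j, x' i j * α j) - ∑ j, x i j * α j by
        rw [← Finset.sum_sub_distrib]; exact Finset.sum_congr rfl fun j _ => by ring]
      ring
    have hle : ∀ i, p' i - p i ≤ (∑ j, (x' i j - x i j) * α j) * v i := by
      intro i
      rw [key i]
      have := himp i
      linarith
    have hsum : ∑ i, (p' i - p i) ≤ ∑ i, (∑ j, (x' i j - x i j) * α j) * v i :=
      Finset.sum_le_sum fun i _ => hle i
    have hps : 0 ≤ ∑ i, (p' i - p i) := by
      rw [Finset.sum_sub_distrib]; linarith
    rcases hstrict with ⟨i0, hi0⟩ | hlt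
    · have hstrictterm : p' i0 - p i0 < (∑ j, (x' i0 j - x i0 j) * α j) * v i0 := by
        rw [key i0]; linarith
      have : ∑ i, (p' i - p i) < ∑ i, (∑ j, (x' i j - x i j) * α j) * v i :=
        Finset.sum_lt_sum (fun i _ => hle i) ⟨i0, Finset.mem_univ i0, hstrictterm⟩
      linarith
    · have : 0 < ∑ i, (p' i - p i) := by
        rw [Finset.sum_sub_distrib]; linarith
      linarith
  · -- budget-limited sum nonnegative
    have key : ∀ i, (∑ j, (x' i j - x i j) * α j) * v i
        = (sValue α v x' i - p' i) - (sValue α v x i - p i) + (p' i - p i) := by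
      intro i
      simp only [sValue]
      rw [show (∑ j, (x' i j - x i j) * α j)
          = (∑ j, x' i j * α j) - ∑ j, x i j * α j by
        rw [← Finset.sum_sub_distrib]; exact Finset.sum_congr rfl fun j _ => by ring]
      ring
    have hle : ∀ i, p' i - p i ≤ (∑ j, (x' i j - x i j) * α j) * v i := by
      intro i
      rw [key i]
      have := himp i
      linarith
    have hminle : ∀ i ∈ Finset.univ.filter
        (fun i => 0 < ∑ j, (x' i j - x i j) * α j),
        p' i - p i ≤ min (b i - p i) ((∑ j, (x' i j - x i j) * α j) * v i) := by
      intro i _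
      exact le_min (by have := hp'b i; linarith) (hle i)
    have h1 : ∑ i ∈ Finset.univ.filter (fun i => 0 < ∑ j, (x' i j - x i j) * α j),
          (p' i - p i)
        ≤ ∑ i ∈ Finset.univ.filter (fun i => 0 < ∑ j, (x' i j - x i j) * α j),
          min (b i - p i) ((∑ j, (x' i j - x i j) * α j) * v i) :=
      Finset.sum_le_sum hminle
    have h2 : ∑ i ∈ Finset.univ.filter (fun i => (∑ j, (x' i j - x i j) * α j) ≤ 0),
          (p' i - p i)
        ≤ ∑ i ∈ Finset.univ.filter (fun i => (∑ j, (x' i j - x i j) * α j) ≤ 0),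
          (∑ j, (x' i j - x i j) * α j) * v i :=
      Finset.sum_le_sum fun i _ => hle i
    have hLset : Finset.univ.filter (fun i => (∑ j, (x' i j - x i j) * α j) ≤ 0)
        = Finset.univ.filter (fun i => ¬ 0 < ∑ j, (x' i j - x i j) * α j) := by
      apply Finset.filter_congr
      intro i _
      simp [not_lt]
    have h3 : (∑ i ∈ Finset.univ.filter (fun i => 0 < ∑ j, (x' i j - x i j) * α j),
          (p' i - p i)) +
        ∑ i ∈ Finset.univ.filter (fun i => (∑ j, (x' i j - x i j) * α j) ≤ 0),
          (p' i - p i) = ∑ i, (p' i - p i) := by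
      rw [hLset, Finset.sum_filter_add_sum_filter_not]
    have hps : 0 ≤ ∑ i, (p' i - p i) := by
      rw [Finset.sum_sub_distrib]; linarith
    linarith
end
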